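/- arXiv:1409.8093 — 3 statements merged into one kernel-verified Lean document; each statement's English description precedes it below -/
import Mathlib

section
/- For π ∈ G_{r,n} with B-code b, the refined colored cycle sets satisfy Cyc^0(π) = Max^0(b) and Cyc^t(π) = Max^{r-t}(b) for 1 ≤ t ≤ r-1. -/
noncomputable section
open scoped Classical

/-- The colored permutation group `G_{r,n} = C_r ≀ S_n`, with elements `(σ, z)`
written in window notation `σ_1^{[z_1]} ⋯ σ_n^{[z_n]}`. -/
structure CPerm (r n : ℕ) where
  perm : Equiv.Perm (Fin n)
  col : Fin n → ZMod r

namespace CPerm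

variable {r n : ℕ}

theorem ext' {a b : CPerm r n} (h1 : a.perm = b.perm) (h2 : a.col = b.col) : a = b := by
  cases a; cases b; cases h1; cases h2; rfl

instance : Mul (CPerm r n) :=
  ⟨fun a b => ⟨a.perm * b.perm, fun i => b.col i + a.col (b.perm i)⟩⟩
instance : One (CPerm r n) := ⟨⟨1, 0⟩⟩
instance : Inv (CPerm r n) := ⟨fun a => ⟨a.perm⁻¹, fun i => - a.col (a.perm⁻¹ i)⟩⟩

@[simp] theorem mul_perm (a b : CPerm r n) : (a * b).perm = a.perm * b.perm := rfl
@[simp] theorem mul_col (a b : CPerm r n) (i : Fin n) :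
    (a * b).col i = b.col i + a.col (b.perm i) := rfl
@[simp] theorem one_perm : (1 : CPerm r n).perm = 1 := rfl
@[simp] theorem one_col (i : Fin n) : (1 : CPerm r n).col i = 0 := rfl
@[simp] theorem inv_perm (a : CPerm r n) : (a⁻¹).perm = a.perm⁻¹ := rfl
@[simp] theorem inv_col (a : CPerm r n) (i : Fin n) :
    (a⁻¹).col i = - a.col (a.perm⁻¹ i) := rfl

instance : Group (CPerm r n) :=
  Group.ofLeftAxioms
    (fun a b c => ext' (mul_assoc _ _ _)
      (by funext i; simp [mul_assoc, add_assoc]))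
    (fun a => ext' (one_mul _) (by funext i; simp))
    (fun a => ext' (inv_mul_cancel _) (by funext i; simp))

instance instFintype [NeZero r] : Fintype (CPerm r n) :=
  Fintype.ofEquiv (Equiv.Perm (Fin n) × (Fin n → ZMod r))
    { toFun := fun p => ⟨p.1, p.2⟩
      invFun := fun g => (g.perm, g.col)
      left_inv := fun _ => rfl
      right_inv := fun _ => rfl }

/-- The window notation letter at position `i`: the pair (base value, color). -/
def window (π : CPerm r n) (i : Fin n) : Fin n × ZMod r := (π.perm i, π.col i)

/-- The action of `π` on the colored letter `x = b^{[c]}`. -/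
def actC (π : CPerm r n) (x : Fin n × ZMod r) : Fin n × ZMod r :=
  (π.perm x.1, x.2 + π.col x.1)

/-- The colored transposition `(i^{[t]} j)` (for `i < j`), resp. the coloring
operation `(i^{[t]} i)` when `i = j`. -/
def ct (i : Fin n) (t : ZMod r) (j : Fin n) : CPerm r n :=
  ⟨Equiv.swap i j, fun k => if k = j then t else if k = i then -t else 0⟩

/-- The generator `s_0`, adding one to the color of the first letter. -/
def s0 (h : 0 < n) : CPerm r n := ⟨1, fun k => if k = ⟨0, h⟩ then 1 else 0⟩

/-- The standard generating set `{s_0, s_1, …, s_{n-1}}` of `G_{r,n}`. -/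
def gens : Set (CPerm r n) :=
  {g | (∃ h : 0 < n, g = s0 h) ∨
       ∃ (i : Fin n) (h : i.val + 1 < n), g = ct i 0 ⟨i.val + 1, h⟩}

/-- Word length with respect to a set `S` of generators. -/
def lenWrt (S : Set (CPerm r n)) (π : CPerm r n) : ℕ :=
  sInf {k | ∃ l : List (CPerm r n), l.length = k ∧ (∀ g ∈ l, g ∈ S) ∧ l.prod = π}

/-- The length function `ℓ` on `G_{r,n}` w.r.t. the generators `s_0, …, s_{n-1}`. -/
def len (π : CPerm r n) : ℕ := lenWrt gens π

/-- The set `T_n` of colored transpositions and coloring operations. -/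
def Tset : Set (CPerm r n) :=
  {g | ∃ (i j : Fin n) (t : ZMod r), (i < j ∨ (i = j ∧ t ≠ 0)) ∧ g = ct i t j}

/-- The reflection-type length `ℓ'` on `G_{r,n}`. -/
def lenT (π : CPerm r n) : ℕ := lenWrt Tset π

/-- The linear order `n^{[r-1]} < ⋯ < 1^{[r-1]} < ⋯ < 1^{[1]} < 1 < ⋯ < n`
on colored letters. -/
def clt (x y : Fin n × ZMod r) : Prop :=
  (x.2 = 0 ∧ y.2 = 0 ∧ x.1 < y.1) ∨ (x.2 ≠ 0 ∧ y.2 = 0) ∨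
    (x.2 ≠ 0 ∧ y.2 ≠ 0 ∧ (y.1 < x.1 ∨ (x.1 = y.1 ∧ y.2.val < x.2.val)))

/-- The number of inversions of the window word of `π` w.r.t. the order `clt`. -/
def invStat (π : CPerm r n) : ℕ :=
  {p : Fin n × Fin n | p.1 < p.2 ∧ clt (window π p.2) (window π p.1)}.ncard

/-- `l` is the factorization of `π` into colored transpositions
`(i_1^{[t_1]} j_1) ⋯ (i_k^{[t_k]} j_k)` with `j_1 < ⋯ < j_k`, each factor being
either a colored transposition (`i < j`, any `t`) or a coloring operation
(`i = j`, `t ≠ 0`). A factor is recorded as the triple `(i, t, j)`. -/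
def IsSorFact (π : CPerm r n) (l : List (Fin n × ZMod r × Fin n)) : Prop :=
  (∀ x ∈ l, x.1 < x.2.2 ∨ (x.1 = x.2.2 ∧ x.2.1 ≠ 0)) ∧
  (l.map fun x => x.2.2).Pairwise (· < ·) ∧
  (l.map fun x => ct x.1 x.2.1 x.2.2).prod = π

/-- The contribution `j - i + χ(t > 0)·(2(i-1) + t)` of a factor `(i^{[t]} j)`
to the sorting index (with `i, j` taken as `1`-based values). -/
def sorTerm (x : Fin n × ZMod r × Fin n) : ℕ :=
  (x.2.2.val - x.1.val) + if x.2.1 ≠ 0 then 2 * x.1.val + x.2.1.val else 0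

/-- The refined colored cycle set `Cyc^t(π)`: smallest base values of the
colored cycles of `π` whose color sum is `t`. -/
def CycT (t : ZMod r) (π : CPerm r n) : Set (Fin n) :=
  {i | (∀ j, π.perm.SameCycle i j → i ≤ j) ∧
       (∑ j ∈ Finset.univ.filter fun j => π.perm.SameCycle i j, π.col j) = t}

/-- The Lehmer code of `π`: `Leh(π) i = (h_i, -z_i)` with
`h_i = #{j ≤ i : σ_j ≤ σ_i}` (so `h_i` is `1`-based). -/
def Leh (π : CPerm r n) (i : Fin n) : ℕ × ZMod r :=
  ({j | j ≤ i ∧ π.perm j ≤ π.perm i}.ncard, - π.col i)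

/-- The A-code: `A-code(π) = Leh(π⁻¹)`. -/
def Acode (π : CPerm r n) : Fin n → ℕ × ZMod r := Leh π⁻¹

/-- The smallest `k ≥ 1` such that the base value of `π^{-k}(i)` is at most `i`. -/
def kmin (π : CPerm r n) (i : Fin n) : ℕ :=
  sInf {k | 1 ≤ k ∧ (π⁻¹ ^ k).perm i ≤ i}

/-- The B-code: `B-code(π) i = π^{-k_i}(i)` as a colored letter. -/
def Bcode (π : CPerm r n) (i : Fin n) : Fin n × ZMod r :=
  actC (π⁻¹ ^ kmin π i) (i, (0 : ZMod r))

/-- Right-to-left minimum letters of color `t` (base values). -/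
def RmilT (t : ZMod r) (π : CPerm r n) : Set (Fin n) :=
  {b | ∃ i, π.perm i = b ∧ π.col i = t ∧ ∀ j, i < j → π.perm i < π.perm j}

/-- Left-to-right minimum letters of color `t` (base values). -/
def LmilT (t : ZMod r) (π : CPerm r n) : Set (Fin n) :=
  {b | ∃ i, π.perm i = b ∧ π.col i = t ∧ ∀ j, j < i → π.perm i < π.perm j}

/-- Left-to-right maximum letters of color `t` (base values). -/
def LmalT (t : ZMod r) (π : CPerm r n) : Set (Fin n) :=
  {b | ∃ i, π.perm i = b ∧ π.col i = t ∧ ∀ j, j < i → π.perm j < π.perm i}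

/-- Left-to-right maximum places of color `t`. -/
def LmapT (t : ZMod r) (π : CPerm r n) : Set (Fin n) :=
  {i | π.col i = t ∧ ∀ j, j < i → π.perm j < π.perm i}

/-- Right-to-left minimum letters of `π` (as colored letters). -/
def RmilSet (π : CPerm r n) : Set (Fin n × ZMod r) :=
  {x | ∃ i, window π i = x ∧ ∀ j, i < j → π.perm i < π.perm j}

/-- Left-to-right minimum letters of `π` (as colored letters). -/
def LmilSet (π : CPerm r n) : Set (Fin n × ZMod r) :=
  {x | ∃ i, window π i = x ∧ ∀ j, j < i → π.perm i < π.perm j}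

/-- Left-to-right maximum letters of `π` (as colored letters). -/
def LmalSet (π : CPerm r n) : Set (Fin n × ZMod r) :=
  {x | ∃ i, window π i = x ∧ ∀ j, j < i → π.perm j < π.perm i}

/-- Left-to-right maximum places of `π` (as colored places `i^{[z_i]}`). -/
def LmapSet (π : CPerm r n) : Set (Fin n × ZMod r) :=
  {x | π.col x.1 = x.2 ∧ ∀ j, j < x.1 → π.perm j < π.perm x.1}

/-- The `k`-th letter `π^k(1)` of the orbit word `π(1) π²(1) π³(1) ⋯`. -/
def orbitWord (π : CPerm r n) (h : 0 < n) (k : ℕ) : Fin n × ZMod r :=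
  actC (π ^ k) (⟨0, h⟩, (0 : ZMod r))

/-- `Lmic(π)`: left-to-right minimum letters of the word `π(1) π²(1) π³(1) ⋯`. -/
def LmicSet (π : CPerm r n) : Set (Fin n × ZMod r) :=
  {x | ∃ (h : 0 < n) (k : ℕ), 1 ≤ k ∧ orbitWord π h k = x ∧
        ∀ m, 1 ≤ m → m < k → (orbitWord π h k).1 < (orbitWord π h m).1}

/-- The color-`t` part of `Lmic(π)`. -/
def LmicT (t : ZMod r) (π : CPerm r n) : Set (Fin n) :=
  {b | (b, t) ∈ LmicSet π}

theorem perm_pow' (π : CPerm r n) (k : ℕ) : (π ^ k).perm = π.perm ^ k := by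
  induction k with
  | zero => simp [pow_zero]
  | succ k ih => rw [pow_succ, pow_succ, mul_perm, ih]

theorem inv_pow_perm (π : CPerm r n) (k : ℕ) : (π⁻¹ ^ k).perm = π.perm⁻¹ ^ k := by
  rw [perm_pow', inv_perm]

theorem inv_pow_col (π : CPerm r n) (k : ℕ) (i : Fin n) :
    (π⁻¹ ^ k).col i = - ∑ m ∈ Finset.range k, π.col ((π.perm⁻¹ ^ (m + 1)) i) := by
  induction k generalizing i with
  | zero => simp
  | succ k ih =>
    have h1 : (π⁻¹ ^ (k + 1)).col i
        = (π⁻¹).col i + (π⁻¹ ^ k).col (π.perm⁻¹ i) := by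
      rw [pow_succ, mul_col, inv_perm]
    rw [h1, inv_col, ih, Finset.sum_range_succ' (fun m => π.col ((π.perm⁻¹ ^ (m + 1)) i)) k]
    have h2 : ∀ m : ℕ, (π.perm⁻¹ ^ (m + 1)) (π.perm⁻¹ i) = (π.perm⁻¹ ^ (m + 1 + 1)) i := by
      intro m
      rw [← Equiv.Perm.mul_apply, ← pow_succ]
    simp only [h2, zero_add, pow_one]
    ring

theorem exists_rep (σ : Equiv.Perm (Fin n)) (i j : Fin n) (k : ℕ) (hk : 1 ≤ k)
    (hfix : (σ⁻¹ ^ k) i = i) (hsc : σ.SameCycle i j) :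
    ∃ m, 1 ≤ m ∧ m ≤ k ∧ (σ⁻¹ ^ m) i = j := by
  obtain ⟨z, hz⟩ := hsc
  have hkz : (0 : ℤ) < (k : ℤ) := by exact_mod_cast hk
  have hfix' : (σ ^ (k : ℤ)) i = i := by
    have : (σ ^ k) i = (σ ^ k) ((σ⁻¹ ^ k) i) := by rw [hfix]
    rw [← Equiv.Perm.mul_apply, inv_pow, mul_inv_cancel] at this
    simpa [zpow_natCast] using this
  have hpow : ∀ m : ℕ, (σ⁻¹ ^ m : Equiv.Perm (Fin n)) = σ ^ (-(m : ℤ)) := by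
    intro m
    rw [zpow_neg, zpow_natCast, inv_pow]
  have htow : ∀ z w : ℤ, (k : ℤ) ∣ z - w → (σ ^ z) i = (σ ^ w) i := by
    intro z w ⟨q, hq⟩
    have hzw : z = w + (k : ℤ) * q := by linarith
    rw [hzw, zpow_add, Equiv.Perm.mul_apply, zpow_mul,
      Equiv.Perm.zpow_apply_eq_self_of_apply_eq_self hfix' q]
  by_cases h0 : (-z) % (k : ℤ) = 0
  · refine ⟨k, hk, le_refl _, ?_⟩
    have hdvd : (k : ℤ) ∣ z - 0 := by
      have h' : (k : ℤ) ∣ z := (dvd_neg).mp (Int.dvd_of_emod_eq_zero h0)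
      simpa using h'
    have : (σ ^ z) i = (σ ^ (0 : ℤ)) i := htow z 0 hdvd
    rw [hfix, ← hz, this, zpow_zero]
    rfl
  · set m : ℕ := ((-z) % (k : ℤ)).toNat with hm
    have hnonneg : 0 ≤ (-z) % (k : ℤ) := Int.emod_nonneg _ (by omega)
    have hlt : (-z) % (k : ℤ) < (k : ℤ) := Int.emod_lt_of_pos _ hkz
    have hmz : (m : ℤ) = (-z) % (k : ℤ) := Int.toNat_of_nonneg hnonneg
    refine ⟨m, ?_, ?_, ?_⟩
    · omega
    · omega
    · rw [hpow m, ← hz]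
      apply htow
      have := Int.emod_emod_of_dvd (-z) (dvd_refl (k : ℤ))
      have hdef : (-z) % (k : ℤ) = -z - (k : ℤ) * ((-z) / (k : ℤ)) := by
        rw [Int.emod_def]
      rw [hmz]
      exact ⟨(-z) / (k : ℤ), by omega⟩

theorem sum_cycle (π : CPerm r n) (i : Fin n) (k : ℕ) (hk : 1 ≤ k)
    (hfix : (π.perm⁻¹ ^ k) i = i)
    (hleast : ∀ m, 1 ≤ m → (π.perm⁻¹ ^ m) i = i → k ≤ m) :
    ∑ m ∈ Finset.range k, π.col ((π.perm⁻¹ ^ (m + 1)) i)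
      = ∑ j ∈ Finset.univ.filter (fun j => π.perm.SameCycle i j), π.col j := by
  set σ := π.perm with hσ
  have hpow : ∀ m : ℕ, (σ⁻¹ ^ m : Equiv.Perm (Fin n)) = σ ^ (-(m : ℤ)) := by
    intro m
    rw [zpow_neg, zpow_natCast, inv_pow]
  have key : ∀ a b : ℕ, a ≤ b → b < k →
      (σ⁻¹ ^ (a + 1)) i = (σ⁻¹ ^ (b + 1)) i → a = b := by
    intro a b hab hbk he
    by_contra hne
    have h1 : 1 ≤ b - a := by omega
    have h2 : (σ⁻¹ ^ (b + 1) : Equiv.Perm (Fin n)) = σ⁻¹ ^ (b - a) * σ⁻¹ ^ (a + 1) := by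
      rw [← pow_add]
      congr 1
      omega
    have h3 : (σ⁻¹ ^ (b - a)) ((σ⁻¹ ^ (a + 1)) i) = (σ⁻¹ ^ (a + 1)) i := by
      rw [← Equiv.Perm.mul_apply, ← h2, ← he]
    have hcomm : (σ⁻¹ ^ (b - a) : Equiv.Perm (Fin n)) * σ⁻¹ ^ (a + 1)
        = σ⁻¹ ^ (a + 1) * σ⁻¹ ^ (b - a) := by
      rw [← pow_add, ← pow_add, Nat.add_comm]
    have h4 : (σ⁻¹ ^ (a + 1)) ((σ⁻¹ ^ (b - a)) i) = (σ⁻¹ ^ (a + 1)) i := by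
      rw [← Equiv.Perm.mul_apply, ← hcomm, Equiv.Perm.mul_apply, h3]
    have h5 : (σ⁻¹ ^ (b - a)) i = i := (σ⁻¹ ^ (a + 1)).injective h4
    have := hleast _ h1 h5
    omega
  refine Finset.sum_bij (fun m _ => (σ⁻¹ ^ (m + 1)) i) ?_ ?_ ?_ ?_
  · intro a _
    simp only [Finset.mem_filter, Finset.mem_univ, true_and]
    exact ⟨-((a : ℤ) + 1), by rw [show -((a : ℤ) + 1) = -(((a + 1 : ℕ)) : ℤ) by push_cast; ring,
      ← hpow]⟩
  · intro a ha b hb he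
    simp only [Finset.mem_range] at ha hb
    rcases le_total a b with h | h
    · exact key a b h hb he
    · exact (key b a h ha he.symm).symm
  · intro j hj
    simp only [Finset.mem_filter, Finset.mem_univ, true_and] at hj
    obtain ⟨m, hm1, hmk, hmj⟩ := exists_rep σ i j k hk hfix hj
    refine ⟨m - 1, Finset.mem_range.mpr (by omega), ?_⟩
    show (σ⁻¹ ^ (m - 1 + 1)) i = j
    rw [show m - 1 + 1 = m by omega]
    exact hmj
  · intro a _
    rfl

theorem cycT_eq_bcode (π : CPerm r n) (t : ZMod r) :
    CycT t π = {i : Fin n | Bcode π i = (i, -t)} := by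
  ext i
  simp only [CycT, Bcode, actC, kmin, Set.mem_setOf_eq, zero_add]
  set σ := π.perm with hσ
  have hpow : ∀ m : ℕ, (σ⁻¹ ^ m : Equiv.Perm (Fin n)) = σ ^ (-(m : ℤ)) := by
    intro m
    rw [zpow_neg, zpow_natCast, inv_pow]
  have hscyc : ∀ m : ℕ, σ.SameCycle i ((σ⁻¹ ^ m) i) := fun m =>
    ⟨-(m : ℤ), by rw [← hpow]⟩
  have hord : 0 < orderOf σ := orderOf_pos σ
  have hordfix : (σ⁻¹ ^ orderOf σ) i = i := by
    rw [inv_pow, pow_orderOf_eq_one]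
    rfl
  have hNE : {k | 1 ≤ k ∧ (π⁻¹ ^ k).perm i ≤ i}.Nonempty :=
    ⟨orderOf σ, hord, by rw [inv_pow_perm, ← hσ, hordfix]⟩
  set k := sInf {k | 1 ≤ k ∧ (π⁻¹ ^ k).perm i ≤ i} with hkdef
  have hkmem := Nat.sInf_mem hNE
  have hk1 : 1 ≤ k := hkmem.1
  have hkle : (σ⁻¹ ^ k) i ≤ i := by
    have := hkmem.2
    rwa [inv_pow_perm, ← hσ] at this
  have hminle : ∀ m, 1 ≤ m → (σ⁻¹ ^ m) i ≤ i → k ≤ m := by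
    intro m h1 h2
    exact Nat.sInf_le ⟨h1, by rwa [inv_pow_perm, ← hσ]⟩
  constructor
  · rintro ⟨hmincyc, hsum⟩
    have hfix : (σ⁻¹ ^ k) i = i := le_antisymm hkle (hmincyc _ (hscyc k))
    have hleast : ∀ m, 1 ≤ m → (σ⁻¹ ^ m) i = i → k ≤ m := fun m h1 h2 =>
      hminle m h1 (le_of_eq h2)
    have hcolsum := sum_cycle π i k hk1 (by rw [← hσ]; exact hfix)
      (by rw [← hσ]; exact hleast)
    refine Prod.ext ?_ ?_
    · show (π⁻¹ ^ k).perm i = i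
      rw [inv_pow_perm, ← hσ]
      exact hfix
    · show (π⁻¹ ^ k).col i = -t
      rw [inv_pow_col, ← hσ, hcolsum, hsum]
  · intro heq
    have h1 : (π⁻¹ ^ k).perm i = i := congrArg Prod.fst heq
    have h2 : (π⁻¹ ^ k).col i = -t := congrArg Prod.snd heq
    have hfix : (σ⁻¹ ^ k) i = i := by rwa [inv_pow_perm, ← hσ] at h1
    have hmincyc : ∀ j, σ.SameCycle i j → i ≤ j := by
      intro j hsc
      by_contra hlt
      push_neg at hlt
      obtain ⟨m, hm1, hmk, hmj⟩ := exists_rep σ i j k hk1 hfix hsc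
      have hkm : k ≤ m := hminle m hm1 (by rw [hmj]; exact le_of_lt hlt)
      have : m = k := le_antisymm hmk hkm
      rw [this, hfix] at hmj
      exact absurd hmj.symm (ne_of_lt hlt)
    have hleast : ∀ m, 1 ≤ m → (σ⁻¹ ^ m) i = i → k ≤ m := fun m hm1 hm2 =>
      hminle m hm1 (le_of_eq hm2)
    have hcolsum := sum_cycle π i k hk1 (by rw [← hσ]; exact hfix)
      (by rw [← hσ]; exact hleast)
    refine ⟨hmincyc, ?_⟩
    have := h2
    rw [inv_pow_col, ← hσ, hcolsum] at this
    exact neg_injective this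

end CPerm

open CPerm in
/-- For `π ∈ G_{r,n}` with `b = B-code(π)`: `Cyc^0(π) = Max^0(b)` and
`Cyc^t(π) = Max^{r-t}(b)` for `1 ≤ t ≤ r-1` (in `ZMod r`, `r - t = -t`),
where `Max^s(b) = {i : b_i = i^{[s]}}`. -/
theorem Cyc_eq_Max_of_Bcode (r n : ℕ) (π : CPerm r n) :
    CycT 0 π = {i : Fin n | Bcode π i = (i, 0)} ∧
    ∀ t : ZMod r, t ≠ 0 → CycT t π = {i : Fin n | Bcode π i = (i, -t)} := by
  refine ⟨?_, fun t _ => cycT_eq_bcode π t⟩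
  simpa using cycT_eq_bcode π 0
end
end

section
/- The reflection-type length ℓ' on G_{r,n} satisfies ℓ'(π) = n - cyc^0(π) for all π ∈ G_{r,n}, where cyc^0(π) is the number of colored cycles of π whose color sum is 0 mod r. -/
noncomputable section
open scoped Classical

namespace CPerm

variable {r n : ℕ}

/-! ### Auxiliary machinery for `lenT_eq_n_sub_cyc0` -/

section AuxProof
open Equiv Equiv.Perm

-- nat characterization of SameCycle
lemma sc_iff_nat (f : Perm (Fin n)) (x y : Fin n) :
    f.SameCycle x y ↔ ∃ k : ℕ, (f ^ k) x = y := by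
  constructor
  · intro h
    obtain ⟨i, _, hi⟩ := h.exists_pow_eq'
    exact ⟨i, hi⟩
  · rintro ⟨k, rfl⟩
    exact ⟨(k : ℤ), by rw [zpow_natCast]⟩

lemma avoid_pow (f : Perm (Fin n)) (a b i : Fin n)
    (ha : ¬ f.SameCycle i a) (hb : ¬ f.SameCycle i b) (k : ℕ) :
    ((Equiv.swap a b * f) ^ k) i = (f ^ k) i := by
  induction k with
  | zero => simp
  | succ k ih =>
    have h1 : (f ^ (k+1)) i ≠ a := fun h => ha ((sc_iff_nat f i a).mpr ⟨k+1, h⟩)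
    have h2 : (f ^ (k+1)) i ≠ b := fun h => hb ((sc_iff_nat f i b).mpr ⟨k+1, h⟩)
    have hstep : f ((f ^ k) i) = (f ^ (k+1)) i := by
      rw [pow_succ', Equiv.Perm.mul_apply]
    rw [pow_succ', Equiv.Perm.mul_apply, ih, Equiv.Perm.mul_apply, hstep]
    exact Equiv.swap_apply_of_ne_of_ne h1 h2

lemma avoid_sc (f : Perm (Fin n)) (a b i : Fin n)
    (ha : ¬ f.SameCycle i a) (hb : ¬ f.SameCycle i b) (j : Fin n) :
    (Equiv.swap a b * f).SameCycle i j ↔ f.SameCycle i j := by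
  rw [sc_iff_nat, sc_iff_nat]
  constructor
  · rintro ⟨k, hk⟩; exact ⟨k, by rwa [avoid_pow f a b i ha hb] at hk⟩
  · rintro ⟨k, hk⟩; exact ⟨k, by rwa [avoid_pow f a b i ha hb]⟩

lemma pow_mul_period (f : Perm (Fin n)) (a : Fin n) (m : ℕ) (hm : (f ^ m) a = a) (q : ℕ) :
    (f ^ (m * q)) a = a := by
  induction q with
  | zero => simp
  | succ q ih => rw [Nat.mul_succ, pow_add, Equiv.Perm.mul_apply, hm, ih]

lemma pow_mod_apply (f : Perm (Fin n)) (a : Fin n) (m : ℕ) (hm : (f ^ m) a = a) (j : ℕ) :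
    (f ^ j) a = (f ^ (j % m)) a := by
  conv_lhs => rw [← Nat.div_add_mod j m]
  rw [add_comm, pow_add, Equiv.Perm.mul_apply, pow_mul_period f a m hm]

lemma merge_sc (f : Perm (Fin n)) (a b : Fin n) (hab : ¬ f.SameCycle a b) (j : Fin n) :
    (Equiv.swap a b * f).SameCycle a j ↔ f.SameCycle a j ∨ f.SameCycle b j := by
  set g := Equiv.swap a b * f with hg
  constructor
  · intro h
    obtain ⟨k, hk⟩ := (sc_iff_nat g a j).mp h
    subst hk
    clear h
    induction k with
    | zero => exact Or.inl (Equiv.Perm.SameCycle.refl f a)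
    | succ k ih =>
      have hstep : (g ^ (k+1)) a = Equiv.swap a b (f ((g ^ k) a)) := by
        rw [pow_succ', Equiv.Perm.mul_apply, hg, Equiv.Perm.mul_apply]
      rcases ih with h | h
      · have h2 : f.SameCycle a (f ((g ^ k) a)) := h.trans ⟨1, by simp⟩
        have hne : f ((g ^ k) a) ≠ b := fun he => hab (he ▸ h2)
        rcases eq_or_ne (f ((g ^ k) a)) a with he | he
        · rw [hstep, he, Equiv.swap_apply_left]
          exact Or.inr (Equiv.Perm.SameCycle.refl f b)
        · rw [hstep, Equiv.swap_apply_of_ne_of_ne he hne]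
          exact Or.inl h2
      · have h2 : f.SameCycle b (f ((g ^ k) a)) := h.trans ⟨1, by simp⟩
        have hne : f ((g ^ k) a) ≠ a := fun he => hab (by rw [he] at h2; exact h2.symm)
        rcases eq_or_ne (f ((g ^ k) a)) b with he | he
        · rw [hstep, he, Equiv.swap_apply_right]
          exact Or.inl (Equiv.Perm.SameCycle.refl f a)
        · rw [hstep, Equiv.swap_apply_of_ne_of_ne hne he]
          exact Or.inr h2
  · -- backward
    have horder : (0:ℕ) < orderOf f := orderOf_pos f
    have hsetA : ∃ k : ℕ, 0 < k ∧ (f ^ k) a = a :=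
      ⟨orderOf f, horder, by rw [pow_orderOf_eq_one]; rfl⟩
    have hsetB : ∃ k : ℕ, 0 < k ∧ (f ^ k) b = b :=
      ⟨orderOf f, horder, by rw [pow_orderOf_eq_one]; rfl⟩
    set m := Nat.find hsetA with hm
    set mb := Nat.find hsetB with hmb
    obtain ⟨hm0, hma⟩ := Nat.find_spec hsetA
    obtain ⟨hmb0, hmbb⟩ := Nat.find_spec hsetB
    have hga : ∀ k, k < m → (g ^ k) a = (f ^ k) a := by
      intro k hk
      induction k with
      | zero => simp
      | succ k ih =>
        have hlt : k < m := Nat.lt_of_succ_lt hk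
        have h1 : (f ^ (k+1)) a ≠ a := by
          intro he
          exact Nat.find_min hsetA hk ⟨Nat.succ_pos k, he⟩
        have h2 : (f ^ (k+1)) a ≠ b := fun he => hab ⟨(k+1 : ℕ), by rw [zpow_natCast]; exact he⟩
        have hstep : f ((f ^ k) a) = (f ^ (k+1)) a := by rw [pow_succ', Equiv.Perm.mul_apply]
        rw [pow_succ', Equiv.Perm.mul_apply, ih hlt, hg, Equiv.Perm.mul_apply, hstep]
        exact Equiv.swap_apply_of_ne_of_ne h1 h2
    have hgb : ∀ k, k < mb → (g ^ k) b = (f ^ k) b := by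
      intro k hk
      induction k with
      | zero => simp
      | succ k ih =>
        have hlt : k < mb := Nat.lt_of_succ_lt hk
        have h1 : (f ^ (k+1)) b ≠ b := by
          intro he
          exact Nat.find_min hsetB hk ⟨Nat.succ_pos k, he⟩
        have h2 : (f ^ (k+1)) b ≠ a := by
          intro he
          exact hab (Equiv.Perm.SameCycle.symm ⟨(k+1 : ℕ), by rw [zpow_natCast]; exact he⟩)
        have hstep : f ((f ^ k) b) = (f ^ (k+1)) b := by rw [pow_succ', Equiv.Perm.mul_apply]
        rw [pow_succ', Equiv.Perm.mul_apply, ih hlt, hg, Equiv.Perm.mul_apply, hstep]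
        exact Equiv.swap_apply_of_ne_of_ne h2 h1
    have hgab : (g ^ m) a = b := by
      obtain ⟨m', hm'⟩ : ∃ m', m = m' + 1 := ⟨m - 1, by omega⟩
      have hstep : f ((f ^ m') a) = (f ^ (m'+1)) a := by rw [pow_succ', Equiv.Perm.mul_apply]
      have hma' : (f ^ (m'+1)) a = a := by rw [← hm']; exact hma
      rw [hm', pow_succ', Equiv.Perm.mul_apply, hga m' (by omega), hg,
        Equiv.Perm.mul_apply, hstep, hma', Equiv.swap_apply_left]
    have hscab : g.SameCycle a b := (sc_iff_nat g a b).mpr ⟨m, hgab⟩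
    rintro (h | h)
    · obtain ⟨k, hk⟩ := (sc_iff_nat f a j).mp h
      have hkk : (f ^ (k % m)) a = j := by rw [← pow_mod_apply f a m hma k]; exact hk
      exact (sc_iff_nat g a j).mpr ⟨k % m, by rw [hga _ (Nat.mod_lt k hm0)]; exact hkk⟩
    · obtain ⟨k, hk⟩ := (sc_iff_nat f b j).mp h
      have hkk : (f ^ (k % mb)) b = j := by rw [← pow_mod_apply f b mb hmbb k]; exact hk
      have hgbj : g.SameCycle b j :=
        (sc_iff_nat g b j).mpr ⟨k % mb, by rw [hgb _ (Nat.mod_lt k hmb0)]; exact hkk⟩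
      exact hscab.trans hgbj

/-! ### Colored lemmas -/

lemma ct_perm' (a b : Fin n) (t : ZMod r) : (ct a t b).perm = Equiv.swap a b := rfl

lemma ct_col_apply (a b k : Fin n) (t : ZMod r) :
    (ct a t b).col k = if k = b then t else if k = a then -t else 0 := rfl

lemma sum_ct_col (c : Finset (Fin n)) {a b : Fin n} (t : ZMod r) (hab : a ≠ b) :
    ∑ j ∈ c, (ct a t b).col j
      = (if b ∈ c then t else 0) + (if a ∈ c then -t else 0) := by
  have : ∀ j, (ct a t b).col j
      = (if j = b then t else 0) + (if j = a then -t else 0) := by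
    intro j
    rw [ct_col_apply]
    rcases eq_or_ne j b with rfl | h1
    · simp [hab.symm]
    · rcases eq_or_ne j a with rfl | h2
      · simp [h1]
      · simp [h1, h2]
  simp_rw [this]
  rw [Finset.sum_add_distrib, Finset.sum_ite_eq' c b (fun _ => t),
    Finset.sum_ite_eq' c a (fun _ => -t)]

lemma sum_comp_perm {M : Type*} [AddCommMonoid M] (f : Perm (Fin n)) (c : Finset (Fin n))
    (h1 : ∀ j ∈ c, f j ∈ c) (h2 : ∀ j ∈ c, f⁻¹ j ∈ c) (F : Fin n → M) :
    ∑ j ∈ c, F (f j) = ∑ j ∈ c, F j := by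
  apply Finset.sum_nbij' (i := fun a => f a) (j := fun a => f⁻¹ a) h1 h2
  · intro a _; simp
  · intro a _; simp
  · intro a _; rfl

lemma cycT0_min_unique {σ : CPerm r n} {i₁ i₂ c : Fin n} (h₁ : i₁ ∈ CycT (0 : ZMod r) σ)
    (h₂ : i₂ ∈ CycT 0 σ) (hc₁ : σ.perm.SameCycle i₁ c) (hc₂ : σ.perm.SameCycle i₂ c) :
    i₁ = i₂ :=
  le_antisymm (h₁.1 i₂ (hc₁.trans hc₂.symm)) (h₂.1 i₁ (hc₂.trans hc₁.symm))

lemma class_sum {σ : CPerm r n} {i z : Fin n} (hi : i ∈ CycT (0 : ZMod r) σ)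
    (hz : σ.perm.SameCycle i z) :
    ∑ j ∈ Finset.univ.filter (fun j => σ.perm.SameCycle z j), σ.col j = 0 := by
  rw [← hi.2]
  congr 1
  apply Finset.filter_congr
  intro j _
  exact ⟨fun h => hz.trans h, fun h => hz.symm.trans h⟩

lemma mem_cycT0_mul_ct {σ : CPerm r n} {a b : Fin n} {t : ZMod r} {i : Fin n}
    (hi : i ∈ CycT (0 : ZMod r) σ) (ha : ¬ σ.perm.SameCycle i a)
    (hb : ¬ σ.perm.SameCycle i b) :
    i ∈ CycT 0 (ct a t b * σ) := by
  obtain ⟨h1, h2⟩ := hi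
  have hperm : (ct a t b * σ).perm = Equiv.swap a b * σ.perm := rfl
  constructor
  · intro j hj
    rw [hperm] at hj
    exact h1 j ((avoid_sc _ a b i ha hb j).mp hj)
  · have hfilter : (Finset.univ.filter fun j => (ct a t b * σ).perm.SameCycle i j)
        = Finset.univ.filter fun j => σ.perm.SameCycle i j := by
      apply Finset.filter_congr
      intro j _
      rw [hperm]
      exact avoid_sc _ a b i ha hb j
    rw [hfilter, ← h2]
    apply Finset.sum_congr rfl
    intro j hj
    have hj' : σ.perm.SameCycle i j := (Finset.mem_filter.mp hj).2
    have hjc : σ.perm.SameCycle i (σ.perm j) := hj'.trans ⟨1, by simp⟩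
    have hja : σ.perm j ≠ b := fun he => hb (he ▸ hjc)
    have hjb : σ.perm j ≠ a := fun he => ha (he ▸ hjc)
    rw [mul_col, ct_col_apply, if_neg hja, if_neg hjb, add_zero]

lemma sum_class_mul_ct {σ : CPerm r n} {a b : Fin n} (t : ZMod r) (hab : a ≠ b) (z : Fin n) :
    ∑ j ∈ Finset.univ.filter (fun j => σ.perm.SameCycle z j), (ct a t b * σ).col j
      = (∑ j ∈ Finset.univ.filter (fun j => σ.perm.SameCycle z j), σ.col j)
        + (if b ∈ Finset.univ.filter (fun j => σ.perm.SameCycle z j) then t else 0)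
        + (if a ∈ Finset.univ.filter (fun j => σ.perm.SameCycle z j) then -t else 0) := by
  set c := Finset.univ.filter (fun j => σ.perm.SameCycle z j) with hc
  have hinv1 : ∀ j ∈ c, σ.perm j ∈ c := by
    intro j hj
    have hj' := (Finset.mem_filter.mp hj).2
    exact Finset.mem_filter.mpr ⟨Finset.mem_univ _, hj'.trans ⟨1, by simp⟩⟩
  have hinv2 : ∀ j ∈ c, σ.perm⁻¹ j ∈ c := by
    intro j hj
    have hj' := (Finset.mem_filter.mp hj).2
    exact Finset.mem_filter.mpr ⟨Finset.mem_univ _, hj'.trans ⟨-1, by simp⟩⟩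
  have hcol : ∀ j ∈ c, (ct a t b * σ).col j = σ.col j + (ct a t b).col (σ.perm j) :=
    fun j _ => rfl
  rw [Finset.sum_congr rfl hcol, Finset.sum_add_distrib,
    sum_comp_perm σ.perm c hinv1 hinv2 (ct a t b).col, sum_ct_col c t hab, ← add_assoc]

lemma cyc0_mul_le (τ σ : CPerm r n) (hτ : τ ∈ Tset) :
    (CycT (0 : ZMod r) σ).ncard ≤ (CycT (0 : ZMod r) (τ * σ)).ncard + 1 := by
  obtain ⟨a, b, t, hcase, rfl⟩ := hτ
  set S := CycT (0:ZMod r) σ with hSdef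
  set S' := CycT (0:ZMod r) (ct a t b * σ) with hS'def
  set Av : Set (Fin n) := {i | ¬ σ.perm.SameCycle i a ∧ ¬ σ.perm.SameCycle i b} with hAvdef
  have hAv : S ∩ Av ⊆ S' := by
    rintro i ⟨hiS, hia, hib⟩
    exact mem_cycT0_mul_ct hiS hia hib
  have hcard : S.ncard ≤ (S ∩ Av).ncard + (S ∩ Avᶜ).ncard := by
    conv_lhs => rw [← Set.inter_union_compl S Av]
    exact Set.ncard_union_le _ _
  by_cases hsmall : (S ∩ Avᶜ).ncard ≤ 1
  · have hsub : S ⊆ S' ∪ (S ∩ Avᶜ) := by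
      intro i hi
      by_cases hiA : i ∈ Av
      · exact Or.inl (hAv ⟨hi, hiA⟩)
      · exact Or.inr ⟨hi, hiA⟩
    calc S.ncard ≤ (S' ∪ (S ∩ Avᶜ)).ncard := Set.ncard_le_ncard hsub (Set.toFinite _)
      _ ≤ S'.ncard + (S ∩ Avᶜ).ncard := Set.ncard_union_le _ _
      _ ≤ S'.ncard + 1 := by omega
  · have h2 : 1 < (S ∩ Avᶜ).ncard := by omega
    obtain ⟨i₁, hi₁, i₂, hi₂, hne⟩ := (Set.one_lt_ncard (Set.toFinite _)).mp h2
    obtain ⟨hi₁S, hi₁t⟩ := hi₁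
    obtain ⟨hi₂S, hi₂t⟩ := hi₂
    have htouch : ∀ i : Fin n, i ∈ Avᶜ →
        σ.perm.SameCycle i a ∨ σ.perm.SameCycle i b := by
      intro i hi
      by_contra h
      push_neg at h
      exact hi ⟨h.1, h.2⟩
    rcases hcase with hab | ⟨rfl, ht0⟩
    · -- a < b : the main case
      have hab' : a ≠ b := ne_of_lt hab
      have key : ∀ j₁ j₂ : Fin n, j₁ ∈ S → j₂ ∈ S → j₁ ≠ j₂ →
          σ.perm.SameCycle j₁ a → σ.perm.SameCycle j₂ b →
          S.ncard ≤ S'.ncard + 1 := by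
        intro j₁ j₂ hj₁S hj₂S hjne hsc1 hsc2
        have hnab : ¬ σ.perm.SameCycle a b := by
          intro h
          exact hjne (cycT0_min_unique hj₁S hj₂S hsc1 (hsc2.trans h.symm))
        obtain ⟨m, hm1, hmor⟩ : ∃ m : Fin n, (m ≤ j₁ ∧ m ≤ j₂) ∧ (m = j₁ ∨ m = j₂) := by
          rcases le_total j₁ j₂ with h | h
          · exact ⟨j₁, ⟨le_refl _, h⟩, Or.inl rfl⟩
          · exact ⟨j₂, ⟨h, le_refl _⟩, Or.inr rfl⟩
        have hgperm : (ct a t b * σ).perm = Equiv.swap a b * σ.perm := rfl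
        have hgam : (ct a t b * σ).perm.SameCycle a m := by
          rw [hgperm]
          rcases hmor with rfl | rfl
          · exact (merge_sc σ.perm a b hnab m).mpr (Or.inl hsc1.symm)
          · exact (merge_sc σ.perm a b hnab m).mpr (Or.inr hsc2.symm)
        have hmS' : m ∈ S' := by
          constructor
          · intro j hj
            have haj := hgam.trans hj
            rw [hgperm] at haj
            rcases (merge_sc σ.perm a b hnab j).mp haj with h | h
            · exact le_trans hm1.1 (hj₁S.1 j (hsc1.trans h))
            · exact le_trans hm1.2 (hj₂S.1 j (hsc2.trans h))
          · have hfe : (Finset.univ.filter fun j => (ct a t b * σ).perm.SameCycle m j)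
                = (Finset.univ.filter fun j => σ.perm.SameCycle a j)
                  ∪ (Finset.univ.filter fun j => σ.perm.SameCycle b j) := by
              rw [← Finset.filter_or]
              apply Finset.filter_congr
              intro j _
              constructor
              · intro h
                have h' := hgam.trans h
                rw [hgperm] at h'
                exact (merge_sc σ.perm a b hnab j).mp h'
              · intro h
                have h' : (ct a t b * σ).perm.SameCycle a j := by
                  rw [hgperm]; exact (merge_sc σ.perm a b hnab j).mpr h
                exact hgam.symm.trans h'
            have hdisj : Disjoint (Finset.univ.filter fun j => σ.perm.SameCycle a j)
                (Finset.univ.filter fun j => σ.perm.SameCycle b j) := by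
              rw [Finset.disjoint_left]
              intro u hu1 hu2
              exact hnab (((Finset.mem_filter.mp hu1).2).trans
                ((Finset.mem_filter.mp hu2).2).symm)
            rw [hfe, Finset.sum_union hdisj]
            have hamem : a ∈ Finset.univ.filter (fun j => σ.perm.SameCycle a j) :=
              Finset.mem_filter.mpr ⟨Finset.mem_univ _, Equiv.Perm.SameCycle.refl _ _⟩
            have hbmem : b ∈ Finset.univ.filter (fun j => σ.perm.SameCycle b j) :=
              Finset.mem_filter.mpr ⟨Finset.mem_univ _, Equiv.Perm.SameCycle.refl _ _⟩
            have hbnmem : b ∉ Finset.univ.filter (fun j => σ.perm.SameCycle a j) := by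
              intro h
              exact hnab (Finset.mem_filter.mp h).2
            have hannmem : a ∉ Finset.univ.filter (fun j => σ.perm.SameCycle b j) := by
              intro h
              exact hnab ((Finset.mem_filter.mp h).2).symm
            rw [sum_class_mul_ct t hab' a, sum_class_mul_ct t hab' b,
              class_sum hj₁S hsc1, class_sum hj₂S hsc2,
              if_pos hamem, if_neg hbnmem, if_pos hbmem, if_neg hannmem]
            simp
        have hmAv : m ∉ Av := by
          rcases hmor with rfl | rfl
          · exact fun hA => hA.1 hsc1
          · exact fun hA => hA.2 hsc2
        have hmnotin : m ∉ S ∩ Av := fun h => hmAv h.2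
        have hins : insert m (S ∩ Av) ⊆ S' := by
          intro u hu
          rcases Set.mem_insert_iff.mp hu with rfl | hu
          · exact hmS'
          · exact hAv hu
        have hc1 : (S ∩ Av).ncard + 1 ≤ S'.ncard := by
          rw [← Set.ncard_insert_of_notMem hmnotin]
          exact Set.ncard_le_ncard hins (Set.toFinite _)
        have hc2 : (S ∩ Avᶜ).ncard ≤ 2 := by
          have hsub2 : S ∩ Avᶜ ⊆ {j₁, j₂} := by
            rintro u ⟨huS, hut⟩
            rcases htouch u hut with h | h
            · exact Set.mem_insert_iff.mpr
                (Or.inl (cycT0_min_unique huS hj₁S h hsc1))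
            · exact Set.mem_insert_iff.mpr (Or.inr
                (Set.mem_singleton_iff.mpr (cycT0_min_unique huS hj₂S h hsc2)))
          calc (S ∩ Avᶜ).ncard ≤ ({j₁, j₂} : Set (Fin n)).ncard :=
              Set.ncard_le_ncard hsub2 (Set.toFinite _)
            _ = 2 := Set.ncard_pair hjne
        omega
      rcases htouch i₁ hi₁t with h1 | h1 <;> rcases htouch i₂ hi₂t with h2 | h2
      · exact absurd (cycT0_min_unique hi₁S hi₂S h1 h2) hne
      · exact key i₁ i₂ hi₁S hi₂S hne h1 h2
      · exact key i₂ i₁ hi₂S hi₁S hne.symm h2 h1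
      · exact absurd (cycT0_min_unique hi₁S hi₂S h1 h2) hne
    · -- a = b : coloring operation, contradiction with two touching minima
      exfalso
      apply hne
      have t1 := (htouch i₁ hi₁t).elim id id
      have t2 := (htouch i₂ hi₂t).elim id id
      exact cycT0_min_unique hi₁S hi₂S t1 t2

lemma cycT0_of_perm_one {σ : CPerm r n} (h : σ.perm = 1) :
    CycT (0 : ZMod r) σ = {j | σ.col j = 0} := by
  ext i
  have hsc : ∀ j, σ.perm.SameCycle i j ↔ i = j := by
    intro j; rw [h]; exact Equiv.Perm.sameCycle_one
  have hfilter : (Finset.univ.filter fun j => σ.perm.SameCycle i j) = {i} := by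
    apply Finset.ext
    intro j
    simp only [Finset.mem_filter, Finset.mem_univ, true_and, Finset.mem_singleton, hsc j]
    exact eq_comm
  constructor
  · rintro ⟨h1, h2⟩
    show σ.col i = 0
    rw [← h2, hfilter, Finset.sum_singleton]
  · intro hi
    refine ⟨fun j hj => le_of_eq ((hsc j).mp hj), ?_⟩
    rw [hfilter, Finset.sum_singleton]
    exact hi

lemma ct_mul_ct_self {a b : Fin n} (t : ZMod r) (hab : a ≠ b) :
    ct a t b * ct a t b = (1 : CPerm r n) := by
  apply ext'
  · exact Equiv.swap_mul_self a b
  · funext k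
    rw [mul_col, one_col, ct_perm']
    rcases eq_or_ne k a with rfl | hka
    · rw [Equiv.swap_apply_left, ct_col_apply, ct_col_apply]
      simp [hab, hab.symm]
    · rcases eq_or_ne k b with rfl | hkb
      · rw [Equiv.swap_apply_right, ct_col_apply, ct_col_apply]
        simp [hab, hab.symm]
      · rw [Equiv.swap_apply_of_ne_of_ne hka hkb, ct_col_apply]
        simp [hka, hkb]

lemma ct_self_mul_ct_self (i : Fin n) (c : ZMod r) :
    ct i c i * ct i (-c) i = (1 : CPerm r n) := by
  apply ext'
  · exact Equiv.swap_mul_self i i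
  · funext k
    rw [mul_col, one_col]
    have hp : (ct i (-c) i).perm k = k := by
      show Equiv.swap i i k = k
      rw [Equiv.swap_self]
      rfl
    rw [hp, ct_col_apply, ct_col_apply]
    rcases eq_or_ne k i with rfl | h
    · simp
    · simp [h]

lemma gain_main {π : CPerm r n} {x a b : Fin n} {t : ZMod r} (hab : a ≠ b)
    (hcase : (x = a ∧ π.perm x = b) ∨ (x = b ∧ π.perm x = a))
    (ht : (ct a t b).col (π.perm x) = - π.col x) :
    (CycT (0 : ZMod r) π).ncard + 1 ≤ (CycT (0 : ZMod r) (ct a t b * π)).ncard := by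
  set f := π.perm with hf
  set σ := ct a t b * π with hσ
  have hgperm : σ.perm = Equiv.swap a b * f := rfl
  have hfx : f x ≠ x := by
    rcases hcase with ⟨h1', h2'⟩ | ⟨h1', h2'⟩
    · rw [h2']; rw [h1']; exact hab.symm
    · rw [h2']; rw [h1']; exact hab
  have hgx : σ.perm x = x := by
    rw [hgperm]
    rcases hcase with ⟨h1, h2⟩ | ⟨h1, h2⟩
    · rw [Equiv.Perm.mul_apply, h2, Equiv.swap_apply_right, h1]
    · rw [Equiv.Perm.mul_apply, h2, Equiv.swap_apply_left, h1]
  have hscxa : f.SameCycle x a := by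
    rcases hcase with ⟨h1', h2'⟩ | ⟨h1', h2'⟩
    · rw [h1']
    · exact ⟨1, by rw [zpow_one]; exact h2'⟩
  have hscxb : f.SameCycle x b := by
    rcases hcase with ⟨h1', h2'⟩ | ⟨h1', h2'⟩
    · exact ⟨1, by rw [zpow_one]; exact h2'⟩
    · rw [h1']
  have hscxj : ∀ j, σ.perm.SameCycle x j → j = x := by
    intro j hj
    obtain ⟨i, hi⟩ := hj
    rw [Equiv.Perm.zpow_apply_eq_self_of_apply_eq_self hgx] at hi
    exact hi.symm
  have hcolx : σ.col x = 0 := by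
    rw [hσ, mul_col, ht]
    simp
  have hxS' : x ∈ CycT (0:ZMod r) σ := by
    constructor
    · intro j hj
      exact le_of_eq (hscxj j hj).symm
    · have hfe : (Finset.univ.filter fun j => σ.perm.SameCycle x j) = {x} := by
        apply Finset.ext
        intro j
        simp only [Finset.mem_filter, Finset.mem_univ, true_and, Finset.mem_singleton]
        exact ⟨fun h => hscxj j h, fun h => h ▸ Equiv.Perm.SameCycle.refl _ _⟩
      rw [hfe, Finset.sum_singleton, hcolx]
  set S := CycT (0:ZMod r) π with hSdef
  set Av : Set (Fin n) := {i | ¬ f.SameCycle i a ∧ ¬ f.SameCycle i b} with hAvdef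
  have hAv : S ∩ Av ⊆ CycT 0 σ := by
    rintro i ⟨hiS, hia, hib⟩
    exact mem_cycT0_mul_ct hiS hia hib
  have hxAv : x ∉ Av := fun h => h.1 hscxa
  have hscab : f.SameCycle a b := hscxa.symm.trans hscxb
  have htouch1 : (S ∩ Avᶜ) ⊆ {i | f.SameCycle i a} := by
    rintro i ⟨hiS, hit⟩
    rcases not_and_or.mp hit with h | h
    · exact not_not.mp h
    · exact (not_not.mp h).trans hscab.symm
  have hsmall : (S ∩ Avᶜ).ncard ≤ 1 := by
    rw [Set.ncard_le_one (Set.toFinite _)]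
    intro u hu v hv
    exact cycT0_min_unique hu.1 hv.1 (htouch1 hu) (htouch1 hv)
  have hcard : S.ncard ≤ (S ∩ Av).ncard + (S ∩ Avᶜ).ncard := by
    conv_lhs => rw [← Set.inter_union_compl S Av]
    exact Set.ncard_union_le _ _
  have hxnotAvS : x ∉ S ∩ Av := fun h => hxAv h.2
  rcases Nat.le_one_iff_eq_zero_or_eq_one.mp hsmall with h0 | h1
  · have hins : insert x (S ∩ Av) ⊆ CycT (0:ZMod r) σ := by
      intro u hu
      rcases Set.mem_insert_iff.mp hu with rfl | hu
      · exact hxS'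
      · exact hAv hu
    have hle : (S ∩ Av).ncard + 1 ≤ (CycT (0:ZMod r) σ).ncard := by
      rw [← Set.ncard_insert_of_notMem hxnotAvS]
      exact Set.ncard_le_ncard hins (Set.toFinite _)
    omega
  · obtain ⟨i₀, hi₀eq⟩ := Set.ncard_eq_one.mp h1
    have hi₀ : i₀ ∈ S ∩ Avᶜ := by rw [hi₀eq]; exact Set.mem_singleton i₀
    have hi₀S : i₀ ∈ S := hi₀.1
    have hsci₀a : f.SameCycle i₀ a := htouch1 hi₀
    have hsci₀x : f.SameCycle i₀ x := hsci₀a.trans hscxa.symm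
    have hnotxy : ¬ σ.perm.SameCycle x (f x) := fun h => hfx (hscxj _ h)
    have hfdecomp : f = Equiv.swap a b * σ.perm := by
      rw [hgperm, ← mul_assoc, Equiv.swap_mul_self, one_mul]
    have hnab : ¬ σ.perm.SameCycle a b := by
      rcases hcase with ⟨h1', h2'⟩ | ⟨h1', h2'⟩
      · intro h
        rw [← h1', ← h2'] at h
        exact hnotxy h
      · intro h
        rw [← h1', ← h2'] at h
        exact hnotxy h.symm
    have hkey : ∀ j, f.SameCycle x j ↔ (j = x ∨ σ.perm.SameCycle (f x) j) := by
      intro j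
      have h1' : f.SameCycle x j ↔ f.SameCycle a j :=
        ⟨fun h => hscxa.symm.trans h, fun h => hscxa.trans h⟩
      have h2' : f.SameCycle a j ↔ (σ.perm.SameCycle a j ∨ σ.perm.SameCycle b j) := by
        conv_lhs => rw [hfdecomp]
        exact merge_sc σ.perm a b hnab j
      rw [h1', h2']
      rcases hcase with ⟨hx1, hx2⟩ | ⟨hx1, hx2⟩
      · rw [← hx1, ← hx2]
        constructor
        · rintro (h | h)
          · exact Or.inl (hscxj j h)
          · exact Or.inr h
        · rintro (rfl | h)
          · exact Or.inl (Equiv.Perm.SameCycle.refl _ _)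
          · exact Or.inr h
      · rw [← hx1, ← hx2]
        constructor
        · rintro (h | h)
          · exact Or.inr h
          · exact Or.inl (hscxj j h)
        · rintro (rfl | h)
          · exact Or.inr (Equiv.Perm.SameCycle.refl _ _)
          · exact Or.inl h
    set c' := Finset.univ.filter (fun j => σ.perm.SameCycle (f x) j) with hc'
    have hyc' : f x ∈ c' :=
      Finset.mem_filter.mpr ⟨Finset.mem_univ _, Equiv.Perm.SameCycle.refl _ _⟩
    have hxc' : x ∉ c' := by
      intro hx
      exact hnotxy ((Finset.mem_filter.mp hx).2.symm)
    have hne' : c'.Nonempty := ⟨f x, hyc'⟩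
    have hm'c' : c'.min' hne' ∈ c' := Finset.min'_mem _ _
    have hscym' : σ.perm.SameCycle (f x) (c'.min' hne') := (Finset.mem_filter.mp hm'c').2
    have hm'S' : c'.min' hne' ∈ CycT (0:ZMod r) σ := by
      constructor
      · intro j hj
        have hjc : j ∈ c' :=
          Finset.mem_filter.mpr ⟨Finset.mem_univ _, hscym'.trans hj⟩
        exact Finset.min'_le _ _ hjc
      · have hfe : (Finset.univ.filter fun j => σ.perm.SameCycle (c'.min' hne') j) = c' := by
          apply Finset.ext
          intro j
          constructor
          · intro hj
            exact Finset.mem_filter.mpr ⟨Finset.mem_univ _,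
              hscym'.trans (Finset.mem_filter.mp hj).2⟩
          · intro hj
            exact Finset.mem_filter.mpr ⟨Finset.mem_univ _,
              hscym'.symm.trans (Finset.mem_filter.mp hj).2⟩
        have hclassx : (Finset.univ.filter fun j => f.SameCycle x j) = insert x c' := by
          apply Finset.ext
          intro j
          simp only [Finset.mem_filter, Finset.mem_univ, true_and, Finset.mem_insert]
          constructor
          · intro h
            rcases (hkey j).mp h with h | h
            · exact Or.inl h
            · exact Or.inr (Finset.mem_filter.mpr ⟨Finset.mem_univ _, h⟩)
          · intro h
            rcases h with rfl | h
            · exact (hkey j).mpr (Or.inl rfl)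
            · exact (hkey j).mpr (Or.inr (Finset.mem_filter.mp h).2)
        have hamem : a ∈ Finset.univ.filter (fun j => f.SameCycle x j) :=
          Finset.mem_filter.mpr ⟨Finset.mem_univ _, hscxa⟩
        have hbmem : b ∈ Finset.univ.filter (fun j => f.SameCycle x j) :=
          Finset.mem_filter.mpr ⟨Finset.mem_univ _, hscxb⟩
        have htot : ∑ j ∈ (Finset.univ.filter fun j => f.SameCycle x j), σ.col j = 0 := by
          rw [hσ, sum_class_mul_ct t hab x, if_pos hbmem, if_pos hamem,
            class_sum hi₀S hsci₀x]
          simp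
        rw [hclassx, Finset.sum_insert hxc', hcolx, zero_add] at htot
        rw [hfe]
        exact htot
    have hm'x : c'.min' hne' ≠ x := fun h => hxc' (h ▸ hm'c')
    have hm'Av : c'.min' hne' ∉ Av := by
      intro hA
      apply hA.1
      have hx' : f.SameCycle x (c'.min' hne') := (hkey _).mpr (Or.inr hscym')
      exact hx'.symm.trans hscxa
    have hm'notin : c'.min' hne' ∉ insert x (S ∩ Av) := by
      intro h
      rcases Set.mem_insert_iff.mp h with h | h
      · exact hm'x h
      · exact hm'Av h.2
    have hins : insert (c'.min' hne') (insert x (S ∩ Av)) ⊆ CycT (0:ZMod r) σ := by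
      intro u hu
      rcases Set.mem_insert_iff.mp hu with rfl | hu
      · exact hm'S'
      · rcases Set.mem_insert_iff.mp hu with rfl | hu
        · exact hxS'
        · exact hAv hu
    have hcount : (S ∩ Av).ncard + 2 ≤ (CycT (0:ZMod r) σ).ncard := by
      have e1 : (insert (c'.min' hne') (insert x (S ∩ Av))).ncard = (S ∩ Av).ncard + 2 := by
        rw [Set.ncard_insert_of_notMem hm'notin, Set.ncard_insert_of_notMem hxnotAvS]
      rw [← e1]
      exact Set.ncard_le_ncard hins (Set.toFinite _)
    omega

lemma exists_step (π : CPerm r n) (hπ : π ≠ 1) :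
    ∃ τ σ : CPerm r n, τ ∈ Tset ∧ π = τ * σ ∧
      (CycT (0 : ZMod r) π).ncard + 1 ≤ (CycT (0 : ZMod r) σ).ncard := by
  by_cases hperm : π.perm = 1
  · -- coloring case
    have hcol : ∃ i, π.col i ≠ 0 := by
      by_contra h
      push_neg at h
      exact hπ (ext' hperm (funext fun i => h i))
    obtain ⟨i, hci⟩ := hcol
    refine ⟨ct i (π.col i) i, ct i (-π.col i) i * π,
      ⟨i, i, π.col i, Or.inr ⟨rfl, hci⟩, rfl⟩, ?_, ?_⟩
    · rw [← mul_assoc, ct_self_mul_ct_self, one_mul]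
    · have hperm2 : (ct i (-π.col i) i * π).perm = 1 := by
        show Equiv.swap i i * π.perm = 1
        rw [hperm, mul_one, Equiv.swap_self]
        rfl
      rw [cycT0_of_perm_one hperm, cycT0_of_perm_one hperm2]
      have h3 : {j | (ct i (-π.col i) i * π).col j = 0} = insert i {j | π.col j = 0} := by
        ext j
        simp only [Set.mem_setOf_eq, Set.mem_insert_iff]
        have hpj : π.perm j = j := by rw [hperm]; rfl
        have hcj : (ct i (-π.col i) i * π).col j
            = π.col j + (if j = i then -π.col i else 0) := by
          rw [mul_col, hpj, ct_col_apply]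
          rcases eq_or_ne j i with rfl | h
          · simp
          · simp [h]
        rw [hcj]
        rcases eq_or_ne j i with rfl | h
        · simp
        · simp [h]
      have hnotmem : i ∉ {j | π.col j = 0} := fun hmem => hci hmem
      rw [h3, Set.ncard_insert_of_notMem hnotmem]
  · -- permutation case
    have hx : ∃ x, π.perm x ≠ x := by
      by_contra h
      push_neg at h
      exact hperm (Equiv.ext h)
    obtain ⟨x, hx⟩ := hx
    rcases lt_trichotomy x (π.perm x) with hlt | heq | hgt
    · -- x < π.perm x : a = x, b = π.perm x
      set b := π.perm x with hb
      have hab : x ≠ b := ne_of_lt hlt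
      refine ⟨ct x (-π.col x) b, ct x (-π.col x) b * π,
        ⟨x, b, -π.col x, Or.inl hlt, rfl⟩, ?_, ?_⟩
      · rw [← mul_assoc, ct_mul_ct_self _ hab, one_mul]
      · apply gain_main hab (Or.inl ⟨rfl, hb.symm⟩)
        rw [← hb, ct_col_apply, if_pos rfl]
    · exact absurd heq.symm hx
    · -- π.perm x < x : a = π.perm x, b = x
      set a := π.perm x with ha
      have hab : a ≠ x := ne_of_lt hgt
      refine ⟨ct a (π.col x) x, ct a (π.col x) x * π,
        ⟨a, x, π.col x, Or.inl hgt, rfl⟩, ?_, ?_⟩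
      · rw [← mul_assoc, ct_mul_ct_self _ hab, one_mul]
      · apply gain_main hab (Or.inr ⟨rfl, ha.symm⟩)
        rw [← ha, ct_col_apply, if_neg hab, if_pos rfl]

lemma cyc0_le_n (π : CPerm r n) : (CycT (0:ZMod r) π).ncard ≤ n := by
  have h := Set.ncard_le_ncard (Set.subset_univ (CycT (0:ZMod r) π)) (Set.toFinite _)
  rwa [Set.ncard_univ, Nat.card_eq_fintype_card, Fintype.card_fin] at h

lemma cyc0_one : (CycT (0:ZMod r) (1 : CPerm r n)).ncard = n := by
  have h : CycT (0:ZMod r) (1 : CPerm r n) = Set.univ := by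
    rw [cycT0_of_perm_one (rfl : (1 : CPerm r n).perm = 1)]
    ext j
    simp
  rw [h, Set.ncard_univ, Nat.card_eq_fintype_card, Fintype.card_fin]

lemma eq_one_of_cyc0 (π : CPerm r n) (h : (CycT (0:ZMod r) π).ncard = n) : π = 1 := by
  have huniv : CycT (0:ZMod r) π = Set.univ := by
    apply Set.eq_of_subset_of_ncard_le (Set.subset_univ _) _ (Set.toFinite _)
    rw [h, Set.ncard_univ, Nat.card_eq_fintype_card, Fintype.card_fin]
  have hall : ∀ i : Fin n, i ∈ CycT (0:ZMod r) π := fun i => huniv ▸ Set.mem_univ i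
  have hle : ∀ i, i ≤ π.perm i := fun i => (hall i).1 _ ⟨1, by rw [zpow_one]⟩
  have hperm : π.perm = 1 := by
    have hsum : ∑ i : Fin n, ((π.perm i : Fin n) : ℕ) = ∑ i : Fin n, (i : ℕ) :=
      Equiv.sum_comp π.perm (fun i => (i : ℕ))
    have hpt : ∀ i : Fin n, ((i : ℕ)) = ((π.perm i : Fin n) : ℕ) := by
      by_contra hc
      push_neg at hc
      obtain ⟨i0, hi0⟩ := hc
      have hlt : (i0 : ℕ) < ((π.perm i0 : Fin n) : ℕ) := lt_of_le_of_ne (hle i0) hi0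
      have := Finset.sum_lt_sum (f := fun i : Fin n => (i : ℕ))
        (g := fun i : Fin n => ((π.perm i : Fin n) : ℕ))
        (fun i _ => hle i) ⟨i0, Finset.mem_univ _, hlt⟩
      beta_reduce at this
      omega
    apply Equiv.ext
    intro i
    exact Fin.ext (hpt i).symm
  have hcol : π.col = 0 := by
    rw [cycT0_of_perm_one hperm] at huniv
    funext i
    exact Set.eq_univ_iff_forall.mp huniv i
  exact ext' hperm hcol

lemma exists_word : ∀ (k : ℕ) (π : CPerm r n), n - (CycT (0:ZMod r) π).ncard ≤ k →
    ∃ l : List (CPerm r n), (∀ g ∈ l, g ∈ Tset) ∧ l.prod = π ∧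
      l.length ≤ n - (CycT (0:ZMod r) π).ncard := by
  intro k
  induction k with
  | zero =>
    intro π hk
    have h1 : (CycT (0:ZMod r) π).ncard = n := le_antisymm (cyc0_le_n π) (by omega)
    exact ⟨[], by simp, by simp [eq_one_of_cyc0 π h1], by simp⟩
  | succ k ih =>
    intro π hk
    by_cases h1 : (CycT (0:ZMod r) π).ncard = n
    · exact ⟨[], by simp, by simp [eq_one_of_cyc0 π h1], by simp⟩
    · have hlt : (CycT (0:ZMod r) π).ncard < n := lt_of_le_of_ne (cyc0_le_n π) h1
      have hne1 : π ≠ 1 := fun he => h1 (by rw [he]; exact cyc0_one)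
      obtain ⟨τ, σ, hτ, hfact, hgain⟩ := exists_step π hne1
      have hσle : n - (CycT (0:ZMod r) σ).ncard ≤ k := by
        have := cyc0_le_n σ
        omega
      obtain ⟨l, hl1, hl2, hl3⟩ := ih σ hσle
      refine ⟨τ :: l, ?_, ?_, ?_⟩
      · intro g hg
        rcases List.mem_cons.mp hg with rfl | hg
        · exact hτ
        · exact hl1 g hg
      · rw [List.prod_cons, hl2, ← hfact]
      · have := cyc0_le_n σ
        simp only [List.length_cons]
        omega

lemma word_bound : ∀ l : List (CPerm r n), (∀ g ∈ l, g ∈ Tset) →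
    n - (CycT (0:ZMod r) l.prod).ncard ≤ l.length := by
  intro l
  induction l with
  | nil =>
    intro _
    rw [List.prod_nil, cyc0_one]
    simp
  | cons τ l ih =>
    intro h
    have hτ : τ ∈ Tset := h τ List.mem_cons_self
    have ihl := ih (fun g hg => h g (List.mem_cons_of_mem _ hg))
    have hstep := cyc0_mul_le τ l.prod hτ
    rw [List.prod_cons]
    simp only [List.length_cons]
    omega

end AuxProof

end CPerm

open CPerm in
/-- The reflection-type length satisfies `ℓ'(π) = n - cyc^0(π)`, where
`cyc^0(π)` is the number of colored cycles of `π` whose color sum is `0`. -/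
theorem lenT_eq_n_sub_cyc0 (r n : ℕ) (π : CPerm r n) :
    lenT π = n - (CycT 0 π).ncard := by
  obtain ⟨l, hl1, hl2, hl3⟩ := exists_word (n - (CycT (0:ZMod r) π).ncard) π le_rfl
  have hmem : l.length ∈ {k | ∃ l' : List (CPerm r n), l'.length = k ∧
      (∀ g ∈ l', g ∈ Tset) ∧ l'.prod = π} := ⟨l, rfl, hl1, hl2⟩
  have hub : lenT π ≤ n - (CycT (0:ZMod r) π).ncard :=
    le_trans (Nat.sInf_le hmem) hl3
  have hnonempty : {k | ∃ l' : List (CPerm r n), l'.length = k ∧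
      (∀ g ∈ l', g ∈ Tset) ∧ l'.prod = π}.Nonempty := ⟨l.length, hmem⟩
  obtain ⟨l₀, hlen, hl₀T, hl₀p⟩ := Nat.sInf_mem hnonempty
  have hlb : n - (CycT (0:ZMod r) π).ncard ≤ lenT π := by
    have hwb := word_bound l₀ hl₀T
    rw [hl₀p] at hwb
    calc n - (CycT (0:ZMod r) π).ncard ≤ l₀.length := hwb
      _ = lenT π := hlen
  exact le_antisymm hub hlb
end
end

section
/- The distribution of cyc^0 over G_{r,n} is Σ_{π ∈ G_{r,n}} t^{cyc^0(π)} = Π_{i=1}^n (t + ri - 1), and consequently Σ_{π ∈ G_{r,n}} t^{ℓ'(π)} = Π_{i=1}^n (1 + (ri-1)t). -/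
noncomputable section
open scoped Classical

namespace CPermAux
open Equiv Equiv.Perm

variable {α : Type*} [DecidableEq α] [Fintype α]

lemma zpow_mem {σ : Equiv.Perm α} {S : Set α} (h1 : ∀ x ∈ S, σ x ∈ S)
    (h2 : ∀ x ∈ S, σ⁻¹ x ∈ S) {a : α} (ha : a ∈ S) : ∀ k : ℤ, (σ ^ k) a ∈ S := by
  have hn : ∀ (τ : Equiv.Perm α), (∀ x ∈ S, τ x ∈ S) → ∀ k : ℕ, (τ ^ k) a ∈ S := by
    intro τ hτ k
    induction k with
    | zero => simpa using ha
    | succ k ih => rw [pow_succ']; exact hτ _ ih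
  intro k
  rcases k with k | k
  · simpa using hn σ h1 k
  · rw [zpow_negSucc, ← inv_pow]
    exact hn σ⁻¹ h2 (k + 1)

lemma zpow_agree {σ σ' : Equiv.Perm α} {S : Set α} (h1 : ∀ x ∈ S, σ x ∈ S)
    (h2 : ∀ x ∈ S, σ⁻¹ x ∈ S) (hag : ∀ x ∈ S, σ' x = σ x) {a : α} (ha : a ∈ S) :
    ∀ k : ℤ, (σ' ^ k) a = (σ ^ k) a := by
  have haginv : ∀ x ∈ S, σ'⁻¹ x = σ⁻¹ x := by
    intro x hx
    have : σ' (σ⁻¹ x) = x := by rw [hag _ (h2 x hx)]; simp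
    exact (Equiv.Perm.inv_eq_iff_eq).mpr this.symm
  have hn : ∀ k : ℕ, (σ' ^ k) a = (σ ^ k) a := by
    intro k
    induction k with
    | zero => simp
    | succ k ih =>
      rw [pow_succ', pow_succ', Equiv.Perm.mul_apply, Equiv.Perm.mul_apply, ih]
      exact hag _ (by simpa using zpow_mem h1 h2 ha (k : ℤ))
  intro k
  rcases k with k | k
  · simpa using hn k
  · rw [zpow_negSucc, zpow_negSucc, ← inv_pow, ← inv_pow]
    have hm : ∀ k : ℕ, (σ'⁻¹ ^ k) a = (σ⁻¹ ^ k) a := by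
      intro k
      induction k with
      | zero => simp
      | succ k ih =>
        rw [pow_succ', pow_succ', Equiv.Perm.mul_apply, Equiv.Perm.mul_apply, ih]
        have hmem : ((σ⁻¹) ^ k) a ∈ S := by
          have := zpow_mem h1 h2 ha (-(k:ℤ))
          rwa [zpow_neg, ← inv_zpow, zpow_natCast] at this
        exact haginv _ hmem
    exact hm (k+1)

lemma sameCycle_congr {σ σ' : Equiv.Perm α} {S : Set α} (h1 : ∀ x ∈ S, σ x ∈ S)
    (h2 : ∀ x ∈ S, σ⁻¹ x ∈ S) (hag : ∀ x ∈ S, σ' x = σ x) {a : α} (ha : a ∈ S) (x : α) :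
    σ'.SameCycle a x ↔ σ.SameCycle a x := by
  constructor
  · rintro ⟨k, hk⟩; exact ⟨k, by rw [← hk, zpow_agree h1 h2 hag ha]⟩
  · rintro ⟨k, hk⟩; exact ⟨k, by rw [← hk, zpow_agree h1 h2 hag ha]⟩

lemma sameCycle_fixed {σ : Equiv.Perm α} {a : α} (h : σ a = a) (x : α) :
    σ.SameCycle a x ↔ x = a := by
  constructor
  · rintro ⟨k, hk⟩
    have : (σ ^ k) a ∈ ({a} : Set α) := by
      refine zpow_mem (S := {a}) (fun y hy => ?_) (fun y hy => ?_) rfl k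
      · rcases hy with rfl; simp [h]
      · rcases hy with rfl; simp [Equiv.Perm.inv_eq_iff_eq.mpr h.symm]
    rw [hk] at this; exact this
  · rintro rfl; exact Equiv.Perm.SameCycle.refl _ _


lemma sameCycle_natpow {σ : Equiv.Perm α} {a x : α} (h : σ.SameCycle a x) :
    ∃ k : ℕ, (σ ^ k) a = x := by
  obtain ⟨k, _, hk⟩ := h.exists_pow_eq'
  exact ⟨k, hk⟩

/-- Trajectory lemma: if the cycle of `i` avoids `j`, then on the cycle of `i`
(before returning to `i`), `swap i j * σ` agrees with `σ`, and at the return time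
it hits `j`. -/
lemma swap_mul_reach {σ : Equiv.Perm α} {i j : α} (hij : i ≠ j)
    (h : ¬ σ.SameCycle i j) :
    (∀ x, σ.SameCycle i x → (Equiv.swap i j * σ).SameCycle i x) ∧
      (Equiv.swap i j * σ).SameCycle i j := by
  have hnj : ∀ k : ℕ, (σ ^ k) i ≠ j := by
    intro k hk
    exact h ⟨(k : ℤ), by rw [zpow_natCast, hk]⟩
  have H : ∃ c, 0 < c ∧ (σ ^ c) i = i :=
    ⟨orderOf σ, orderOf_pos σ, by rw [pow_orderOf_eq_one]; rfl⟩
  obtain ⟨c, hc0, hci, hmin⟩ : ∃ c, 0 < c ∧ (σ ^ c) i = i ∧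
      ∀ m, m < c → 0 < m → (σ ^ m) i ≠ i := by
    refine ⟨Nat.find H, (Nat.find_spec H).1, (Nat.find_spec H).2, ?_⟩
    intro m hm hm0 hmi
    exact Nat.find_min H hm ⟨hm0, hmi⟩
  have key : ∀ m, m < c → ((Equiv.swap i j * σ) ^ m) i = (σ ^ m) i := by
    intro m
    induction m with
    | zero => simp
    | succ m ih =>
      intro hm
      rw [pow_succ', pow_succ', Equiv.Perm.mul_apply, Equiv.Perm.mul_apply,
        ih (by omega), Equiv.Perm.mul_apply]
      have h1 : σ ((σ ^ m) i) = (σ ^ (m+1)) i := by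
        rw [pow_succ', Equiv.Perm.mul_apply]
      rw [h1]
      exact Equiv.swap_apply_of_ne_of_ne (hmin _ hm (by omega)) (hnj _)
  have hcq : ∀ q : ℕ, ((σ ^ c) ^ q) i = i := by
    intro q
    induction q with
    | zero => simp
    | succ q ihq => rw [pow_succ', Equiv.Perm.mul_apply, ihq, hci]
  have hreach : ((Equiv.swap i j * σ) ^ c) i = j := by
    obtain ⟨d, hd⟩ : ∃ d, c = d + 1 := ⟨c - 1, by omega⟩
    have h1 : ((Equiv.swap i j * σ) ^ (d+1)) i = (Equiv.swap i j * σ) ((σ ^ d) i) := by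
      rw [pow_succ', Equiv.Perm.mul_apply, key _ (by omega)]
    have h2 : σ ((σ ^ d) i) = (σ ^ c) i := by rw [hd, pow_succ', Equiv.Perm.mul_apply]
    rw [hd, h1, Equiv.Perm.mul_apply, h2, hci]
    exact Equiv.swap_apply_left i j
  constructor
  · intro x hx
    obtain ⟨k, hk⟩ := sameCycle_natpow hx
    have hmod : (σ ^ (k % c)) i = x := by
      have hsplit : (σ ^ k) i = (σ ^ (k % c)) ((σ ^ (c * (k/c))) i) := by
        conv_lhs => rw [← Nat.div_add_mod k c]
        rw [Nat.add_comm, pow_add, Equiv.Perm.mul_apply]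
      have h3 : (σ ^ (c * (k / c))) i = i := by rw [pow_mul]; exact hcq _
      rw [← hk, hsplit, h3]
    refine ⟨((k % c : ℕ) : ℤ), ?_⟩
    rw [zpow_natCast, key _ (Nat.mod_lt _ hc0), hmod]
  · exact ⟨(c : ℤ), by rw [zpow_natCast, hreach]⟩

/-- Merging two distinct cycles with a transposition. -/
lemma swap_mul_sameCycle {σ : Equiv.Perm α} {i j : α} (hij : i ≠ j)
    (h : ¬ σ.SameCycle i j) (x : α) :
    (Equiv.swap i j * σ).SameCycle i x ↔ σ.SameCycle i x ∨ σ.SameCycle j x := by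
  constructor
  · rintro ⟨k, hk⟩
    set S : Set α := {y | σ.SameCycle i y ∨ σ.SameCycle j y} with hS
    have h1 : ∀ y ∈ S, (Equiv.swap i j * σ) y ∈ S := by
      intro y hy
      have hσy : σ y ∈ S := by
        rcases hy with hy | hy
        · exact Or.inl (hy.apply_right)
        · exact Or.inr (hy.apply_right)
      rw [Equiv.Perm.mul_apply]
      rcases eq_or_ne (σ y) i with he | he
      · rw [he, Equiv.swap_apply_left]; exact Or.inr (Equiv.Perm.SameCycle.refl _ _)
      rcases eq_or_ne (σ y) j with he2 | he2
      · rw [he2, Equiv.swap_apply_right]; exact Or.inl (Equiv.Perm.SameCycle.refl _ _)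
      · rw [Equiv.swap_apply_of_ne_of_ne he he2]; exact hσy
    have h2 : ∀ y ∈ S, (Equiv.swap i j * σ)⁻¹ y ∈ S := by
      intro y hy
      rw [mul_inv_rev, Equiv.Perm.mul_apply, Equiv.swap_inv]
      have hsw : Equiv.swap i j y ∈ S := by
        rcases eq_or_ne y i with he | he
        · rw [he, Equiv.swap_apply_left]; exact Or.inr (Equiv.Perm.SameCycle.refl _ _)
        rcases eq_or_ne y j with he2 | he2
        · rw [he2, Equiv.swap_apply_right]; exact Or.inl (Equiv.Perm.SameCycle.refl _ _)
        · rw [Equiv.swap_apply_of_ne_of_ne he he2]; exact hy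
      rcases hsw with hy' | hy'
      · exact Or.inl hy'.symm_apply_right
      · exact Or.inr hy'.symm_apply_right
    have : ((Equiv.swap i j * σ) ^ k) i ∈ S :=
      zpow_mem h1 h2 (Or.inl (Equiv.Perm.SameCycle.refl _ _)) k
    rw [hk] at this
    exact this
  · rintro (hx | hx)
    · exact (swap_mul_reach hij h).1 x hx
    · have h' : ¬ σ.SameCycle j i := fun hc => h hc.symm
      have := (swap_mul_reach (Ne.symm hij) h').1 x hx
      rw [Equiv.swap_comm] at this
      exact ((swap_mul_reach hij h).2).trans this

end CPermAux
namespace CPermAux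
open CPerm Equiv Finset

variable {r n : ℕ}

/-- `cyc⁰`, the number of colored cycles with color sum `0`. -/
def cyc0 (π : CPerm r n) : ℕ := (CycT 0 π).ncard

lemma mem_CycT0 {π : CPerm r n} {a : Fin n} :
    a ∈ CycT (0 : ZMod r) π ↔ (∀ j, π.perm.SameCycle a j → a ≤ j) ∧
      (∑ j ∈ Finset.univ.filter fun j => π.perm.SameCycle a j, π.col j) = 0 :=
  Iff.rfl

/-- The orbit of `a` as a `Finset`. -/
def orbF (π : CPerm r n) (a : Fin n) : Finset (Fin n) :=
  Finset.univ.filter fun j => π.perm.SameCycle a j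

lemma mem_orbF {π : CPerm r n} {a x : Fin n} : x ∈ orbF π a ↔ π.perm.SameCycle a x := by
  simp [orbF]

lemma mem_CycT0' {π : CPerm r n} {a : Fin n} :
    a ∈ CycT (0 : ZMod r) π ↔ (∀ j, π.perm.SameCycle a j → a ≤ j) ∧
      (∑ j ∈ orbF π a, π.col j) = 0 :=
  Iff.rfl

lemma orbF_congr {π : CPerm r n} {a b : Fin n} (h : π.perm.SameCycle a b) :
    orbF π b = orbF π a := by
  ext x
  simp only [mem_orbF]
  exact ⟨fun hx => h.trans hx, fun hx => h.symm.trans hx⟩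

lemma mem_CycT0_congr {π π' : CPerm r n} {a : Fin n}
    (horb : ∀ x, π'.perm.SameCycle a x ↔ π.perm.SameCycle a x)
    (hcol : ∀ x, π.perm.SameCycle a x → π'.col x = π.col x) :
    a ∈ CycT (0 : ZMod r) π' ↔ a ∈ CycT 0 π := by
  have hfil : orbF π' a = orbF π a := by
    ext x; simp only [mem_orbF]; exact horb x
  have hsum : (∑ j ∈ orbF π' a, π'.col j) = ∑ j ∈ orbF π a, π.col j := by
    rw [hfil]
    exact Finset.sum_congr rfl fun x hx => hcol x (mem_orbF.mp hx)
  rw [mem_CycT0', mem_CycT0', hsum]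
  constructor
  · rintro ⟨h1, h2⟩
    exact ⟨fun j hj => h1 j ((horb j).mpr hj), h2⟩
  · rintro ⟨h1, h2⟩
    exact ⟨fun j hj => h1 j ((horb j).mp hj), h2⟩

lemma ct_perm (i : Fin n) (t : ZMod r) (j : Fin n) : (ct i t j).perm = Equiv.swap i j := rfl

lemma ct_col_right (i : Fin n) (t : ZMod r) (j : Fin n) : (ct i t j).col j = t := by
  simp [ct]

lemma ct_col_left {i j : Fin n} (hij : i ≠ j) (t : ZMod r) : (ct i t j).col i = -t := by
  simp [ct, hij]

lemma ct_col_other {i j k : Fin n} (hki : k ≠ i) (hkj : k ≠ j) (t : ZMod r) :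
    (ct i t j).col k = 0 := by
  simp [ct, hki, hkj]

lemma ct_mul_self {i j : Fin n} (hij : i ≠ j) (t : ZMod r) : ct i t j * ct i t j = 1 := by
  refine CPerm.ext' ?_ ?_
  · rw [mul_perm, ct_perm, Equiv.swap_mul_self]; rfl
  · funext k
    rw [mul_col, ct_perm]
    rcases eq_or_ne k i with rfl | hki
    · rw [Equiv.swap_apply_left, ct_col_left hij, ct_col_right]; simp
    rcases eq_or_ne k j with rfl | hkj
    · rw [Equiv.swap_apply_right, ct_col_right, ct_col_left hij]; simp
    · rw [Equiv.swap_apply_of_ne_of_ne hki hkj, ct_col_other hki hkj]; simp [ct_col_other hki hkj]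

lemma ct_self_perm (i : Fin n) (t : ZMod r) : (ct i t i).perm = 1 := by
  rw [ct_perm, Equiv.swap_self]; rfl

lemma ct_self_inv (i : Fin n) (t : ZMod r) : (ct i t i)⁻¹ = ct i (-t) i := by
  refine CPerm.ext' ?_ ?_
  · rw [inv_perm, ct_self_perm, ct_self_perm]; rfl
  · funext k
    rw [inv_col, ct_self_perm]
    rcases eq_or_ne k i with rfl | hki
    · simp [ct]
    · simp [ct, hki]

lemma inv_mem_Tset {τ : CPerm r n} (h : τ ∈ Tset) : τ⁻¹ ∈ Tset := by
  obtain ⟨i, j, t, hord, rfl⟩ := h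
  rcases hord with hlt | ⟨rfl, ht⟩
  · have : (ct i t j)⁻¹ = ct i t j :=
      inv_eq_of_mul_eq_one_right (ct_mul_self (ne_of_lt hlt) t)
    rw [this]
    exact ⟨i, j, t, Or.inl hlt, rfl⟩
  · rw [ct_self_inv]
    exact ⟨i, i, -t, Or.inr ⟨rfl, neg_ne_zero.mpr ht⟩, rfl⟩

/-- Cycles avoiding `i` and `j` are preserved by multiplication with a colored
transposition supported on `{i, j}`. -/
lemma mem_CycT0_mul {τ ρ : CPerm r n} {i j : Fin n} (hτp : τ.perm = Equiv.swap i j)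
    (h0 : ∀ k, k ≠ i → k ≠ j → τ.col k = 0) {a : Fin n}
    (hi : ¬ ρ.perm.SameCycle a i) (hj : ¬ ρ.perm.SameCycle a j) :
    a ∈ CycT (0 : ZMod r) (τ * ρ) ↔ a ∈ CycT 0 ρ := by
  have hmemne : ∀ y, ρ.perm.SameCycle a y → y ≠ i ∧ y ≠ j := by
    intro y hy
    exact ⟨fun hyi => hi (hyi ▸ hy), fun hyj => hj (hyj ▸ hy)⟩
  apply mem_CycT0_congr
  · intro x
    rw [mul_perm, hτp]
    refine sameCycle_congr (S := {y | ρ.perm.SameCycle a y}) ?_ ?_ ?_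
      (Equiv.Perm.SameCycle.refl _ _) x
    · exact fun y hy => hy.apply_right
    · exact fun y hy => hy.symm_apply_right
    · intro y hy
      rw [Equiv.Perm.mul_apply]
      obtain ⟨h1, h2⟩ := hmemne _ (Equiv.Perm.SameCycle.apply_right hy)
      exact Equiv.swap_apply_of_ne_of_ne h1 h2
  · intro x hx
    rw [mul_col]
    obtain ⟨h1, h2⟩ := hmemne _ (Equiv.Perm.SameCycle.apply_right hx)
    rw [h0 _ h1 h2, add_zero]

lemma cycMin_unique {σ : Equiv.Perm (Fin n)} {a b : Fin n}
    (ha : ∀ j, σ.SameCycle a j → a ≤ j) (hb : ∀ j, σ.SameCycle b j → b ≤ j)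
    (hab : σ.SameCycle a b) : a = b :=
  le_antisymm (ha b hab) (hb a hab.symm)

end CPermAux
namespace CPermAux
open CPerm Equiv Finset

variable {r n : ℕ}

lemma orbF_nonempty (π : CPerm r n) (a : Fin n) : (orbF π a).Nonempty :=
  ⟨a, mem_orbF.mpr (Equiv.Perm.SameCycle.refl _ _)⟩

lemma min_mem_CycT0 {π : CPerm r n} {a : Fin n}
    (hsum : (∑ j ∈ orbF π a, π.col j) = 0) :
    (orbF π a).min' (orbF_nonempty π a) ∈ CycT (0 : ZMod r) π := by
  set m := (orbF π a).min' (orbF_nonempty π a) with hm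
  have hmem : π.perm.SameCycle a m := mem_orbF.mp ((orbF π a).min'_mem _)
  rw [mem_CycT0']
  constructor
  · intro j hj
    exact (orbF π a).min'_le j (mem_orbF.mpr (hmem.trans hj))
  · rw [orbF_congr hmem, hsum]

lemma image_perm_orbF (π : CPerm r n) (a : Fin n) :
    (orbF π a).image π.perm = orbF π a := by
  apply Finset.eq_of_subset_of_card_le
  · intro y hy
    obtain ⟨x, hx, rfl⟩ := Finset.mem_image.mp hy
    exact mem_orbF.mpr ((mem_orbF.mp hx).apply_right)
  · rw [Finset.card_image_of_injective _ π.perm.injective]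

/-- Multiplying by an element of `Tset` decreases `cyc⁰` by at most one. -/
lemma cyc0_le_mul_add_one {τ ρ : CPerm r n} (hτ : τ ∈ Tset) :
    cyc0 ρ ≤ cyc0 (τ * ρ) + 1 := by
  obtain ⟨i, j, t, _, rfl⟩ := hτ
  have h0 : ∀ k, k ≠ i → k ≠ j → (ct i t j).col k = 0 := fun k h1 h2 => ct_col_other h1 h2 t
  set σ := ρ.perm with hσ
  set π := ct i t j * ρ with hπd
  have hπp : π.perm = Equiv.swap i j * σ := by rw [hπd, mul_perm, ct_perm]
  set R : Set (Fin n) := {a | a ∈ CycT (0 : ZMod r) ρ ∧ (σ.SameCycle a i ∨ σ.SameCycle a j)}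
    with hR
  set K : Set (Fin n) := CycT (0 : ZMod r) ρ \ R with hKdef
  have hKsub : K ⊆ CycT (0 : ZMod r) π := by
    rintro a ⟨haC, haR⟩
    have hai : ¬ σ.SameCycle a i := fun hc => haR ⟨haC, Or.inl hc⟩
    have haj : ¬ σ.SameCycle a j := fun hc => haR ⟨haC, Or.inr hc⟩
    exact (mem_CycT0_mul (ct_perm i t j) h0 hai haj).mpr haC
  have hcover : CycT (0 : ZMod r) ρ ⊆ K ∪ R := fun a ha => by
    by_cases h : a ∈ R
    · exact Or.inr h
    · exact Or.inl ⟨ha, h⟩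
  have hKcard : K.ncard ≤ cyc0 π := Set.ncard_le_ncard hKsub (Set.toFinite _)
  by_cases hsub : ∀ a ∈ R, ∀ b ∈ R, a = b
  · have hRcard : R.ncard ≤ 1 := by
      rcases Set.eq_empty_or_nonempty R with he | ⟨a, ha⟩
      · simp [he]
      · have hss : R ⊆ {a} := fun x hx => hsub x hx a ha
        calc R.ncard ≤ ({a} : Set (Fin n)).ncard := Set.ncard_le_ncard hss (Set.toFinite _)
          _ = 1 := Set.ncard_singleton a
    calc cyc0 ρ ≤ (K ∪ R).ncard := Set.ncard_le_ncard hcover (Set.toFinite _)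
      _ ≤ K.ncard + R.ncard := Set.ncard_union_le _ _
      _ ≤ cyc0 π + 1 := by omega
  · push_neg at hsub
    obtain ⟨a, ha, b, hb, hab⟩ := hsub
    have key : ∀ a b : Fin n, a ∈ CycT (0:ZMod r) ρ → b ∈ CycT (0:ZMod r) ρ →
        σ.SameCycle a i → σ.SameCycle b j → a ≠ b → cyc0 ρ ≤ cyc0 π + 1 := by
      clear hab ha hb
      intro a b haC hbC hai hbj hab
      have hnij : ¬ σ.SameCycle i j := by
        intro hc
        exact hab (cycMin_unique haC.1 hbC.1 (hai.trans (hc.trans hbj.symm)))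
      have hij : i ≠ j := fun h => hnij (h ▸ Equiv.Perm.SameCycle.refl _ _)
      have horb : ∀ x, π.perm.SameCycle i x ↔ (σ.SameCycle i x ∨ σ.SameCycle j x) := by
        intro x; rw [hπp]; exact swap_mul_sameCycle hij hnij x
      have hUnion : orbF π i = orbF ρ i ∪ orbF ρ j := by
        ext x; simp only [mem_orbF, Finset.mem_union]; exact horb x
      have hdisj : Disjoint (orbF ρ i) (orbF ρ j) := by
        rw [Finset.disjoint_left]
        intro x hx hx'
        exact hnij ((mem_orbF.mp hx).trans (mem_orbF.mp hx').symm)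
      have hUinv : (orbF ρ i ∪ orbF ρ j).image σ = orbF ρ i ∪ orbF ρ j := by
        rw [Finset.image_union, image_perm_orbF, image_perm_orbF]
      have hsums : (∑ x ∈ orbF π i, π.col x) = 0 := by
        have hcol : ∀ x, π.col x = ρ.col x + (ct i t j).col (σ x) := fun x => by
          rw [hπd, mul_col]
        have e1 : (∑ x ∈ orbF π i, π.col x)
            = (∑ x ∈ orbF ρ i ∪ orbF ρ j, ρ.col x)
              + ∑ x ∈ orbF ρ i ∪ orbF ρ j, (ct i t j).col (σ x) := by
          rw [hUnion, ← Finset.sum_add_distrib]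
          exact Finset.sum_congr rfl fun x _ => hcol x
        have e2 : (∑ x ∈ orbF ρ i ∪ orbF ρ j, ρ.col x) = 0 := by
          rw [Finset.sum_union hdisj, orbF_congr hai, orbF_congr hbj,
            (mem_CycT0'.mp haC).2, (mem_CycT0'.mp hbC).2, add_zero]
        have e3 : (∑ x ∈ orbF ρ i ∪ orbF ρ j, (ct i t j).col (σ x)) = 0 := by
          have e4 : (∑ x ∈ orbF ρ i ∪ orbF ρ j, (ct i t j).col (σ x))
              = ∑ y ∈ (orbF ρ i ∪ orbF ρ j).image σ, (ct i t j).col y := by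
            rw [Finset.sum_image (fun x _ y _ h => σ.injective h)]
          rw [e4, hUinv]
          have hij_sub : ({i, j} : Finset (Fin n)) ⊆ orbF ρ i ∪ orbF ρ j := by
            intro x hx
            rcases Finset.mem_insert.mp hx with rfl | hx
            · exact Finset.mem_union_left _ (mem_orbF.mpr (Equiv.Perm.SameCycle.refl _ _))
            · rw [Finset.mem_singleton] at hx
              subst hx
              exact Finset.mem_union_right _ (mem_orbF.mpr (Equiv.Perm.SameCycle.refl _ _))
          rw [← Finset.sum_subset hij_sub (fun x _ hx => h0 x
              (fun h => hx (by simp [h])) (fun h => hx (by simp [h])))]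
          rw [Finset.sum_pair hij, ct_col_left hij, ct_col_right]
          simp
        rw [e1, e2, e3, add_zero]
      set m := (orbF π i).min' (orbF_nonempty π i) with hmdef
      have hmC : m ∈ CycT (0 : ZMod r) π := min_mem_CycT0 hsums
      have hmorb : π.perm.SameCycle i m := mem_orbF.mp ((orbF π i).min'_mem _)
      have hmK : m ∉ K := by
        rintro ⟨hm1, hm2⟩
        rcases (horb m).mp hmorb with hc | hc
        · exact hm2 ⟨hm1, Or.inl hc.symm⟩
        · exact hm2 ⟨hm1, Or.inr hc.symm⟩
      have hins : insert m K ⊆ CycT (0 : ZMod r) π := by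
        intro x hx
        rcases Set.mem_insert_iff.mp hx with rfl | hx
        · exact hmC
        · exact hKsub hx
      have h5 : K.ncard + 1 ≤ cyc0 π := by
        have := Set.ncard_le_ncard hins (Set.toFinite _)
        rwa [Set.ncard_insert_of_notMem hmK] at this
      have hRsub : R ⊆ {a, b} := by
        rintro x ⟨hx1, hx2 | hx2⟩
        · exact Or.inl (cycMin_unique hx1.1 haC.1 (hx2.trans hai.symm))
        · exact Or.inr (cycMin_unique hx1.1 hbC.1 (hx2.trans hbj.symm))
      have hR2 : R.ncard ≤ 2 := by
        calc R.ncard ≤ ({a, b} : Set (Fin n)).ncard := Set.ncard_le_ncard hRsub (Set.toFinite _)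
          _ = 2 := Set.ncard_pair hab
      have h6 : cyc0 ρ ≤ K.ncard + 2 := by
        calc cyc0 ρ ≤ (K ∪ R).ncard := Set.ncard_le_ncard hcover (Set.toFinite _)
          _ ≤ K.ncard + R.ncard := Set.ncard_union_le _ _
          _ ≤ K.ncard + 2 := by omega
      omega
    obtain ⟨haC, hai | haj⟩ := ha <;> obtain ⟨hbC, hbi | hbj⟩ := hb
    · exact absurd (cycMin_unique haC.1 hbC.1 (hai.trans hbi.symm)) hab
    · exact key a b haC hbC hai hbj hab
    · exact key b a hbC haC hbi haj hab.symm
    · exact absurd (cycMin_unique haC.1 hbC.1 (haj.trans hbj.symm)) hab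

end CPermAux
namespace CPermAux
open CPerm Equiv Finset

variable {r n : ℕ}

lemma step_core {π τ : CPerm r n} {i j : Fin n} (hij : i ≠ j) (hj : π.perm i = j)
    (hτp : τ.perm = Equiv.swap i j) (hci : τ.col i = π.col i) (hcj : τ.col j = -π.col i)
    (h0 : ∀ k, k ≠ i → k ≠ j → τ.col k = 0) :
    cyc0 π + 1 ≤ cyc0 (τ * π) := by
  set σ := π.perm with hσ
  set π' := τ * π with hπ'd
  have hπp : π'.perm = Equiv.swap i j * σ := by rw [hπ'd, mul_perm, hτp]
  have hfix : π'.perm i = i := by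
    rw [hπp, Equiv.Perm.mul_apply, hj, Equiv.swap_apply_right]
  have hfix_iff : ∀ x, π'.perm.SameCycle i x ↔ x = i := fun x => sameCycle_fixed hfix x
  have hnij' : ¬ π'.perm.SameCycle i j := fun hc => hij ((hfix_iff j).mp hc).symm
  have hswapswap : Equiv.swap i j * π'.perm = σ := by
    rw [hπp, ← mul_assoc, Equiv.swap_mul_self, one_mul]
  have hM : ∀ x, σ.SameCycle i x ↔ (x = i ∨ π'.perm.SameCycle j x) := by
    intro x
    rw [← hswapswap, swap_mul_sameCycle hij hnij' x, hfix_iff]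
  have hS : ∀ x, π'.perm.SameCycle j x ↔ (σ.SameCycle i x ∧ x ≠ i) := by
    intro x
    constructor
    · intro hx
      refine ⟨(hM x).mpr (Or.inr hx), ?_⟩
      rintro rfl
      exact hnij' hx.symm
    · rintro ⟨hx, hxi⟩
      rcases (hM x).mp hx with rfl | h
      · exact absurd rfl hxi
      · exact h
  have hcol : ∀ x, π'.col x = π.col x + τ.col (σ x) := fun x => by rw [hπ'd, mul_col]
  -- i is a new fixed point of color 0
  have hiC : i ∈ CycT (0 : ZMod r) π' := by
    rw [mem_CycT0']
    constructor
    · intro x hx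
      rw [(hfix_iff x).mp hx]
    · have horb1 : orbF π' i = {i} := by
        ext x; rw [mem_orbF, hfix_iff, Finset.mem_singleton]
      rw [horb1, Finset.sum_singleton, hcol, hj, hcj]
      simp
  set K : Set (Fin n) := CycT (0 : ZMod r) π \ {a | σ.SameCycle a i} with hKdef
  have hscij : σ.SameCycle i j := ⟨1, by simp [hj]⟩
  have hKsub : K ⊆ CycT (0 : ZMod r) π' := by
    rintro a ⟨haC, haR⟩
    have hai : ¬ σ.SameCycle a i := haR
    have haj : ¬ σ.SameCycle a j := by
      intro hc
      exact hai (hc.trans hscij.symm)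
    exact (mem_CycT0_mul hτp h0 hai haj).mpr haC
  have hiK : i ∉ K := fun hc => hc.2 (Equiv.Perm.SameCycle.refl _ _)
  by_cases hex : ∃ m, m ∈ CycT (0 : ZMod r) π ∧ σ.SameCycle m i
  · -- old cycle of i had color sum 0; both i and the new min survive
    obtain ⟨m, hmC, hmi⟩ := hex
    have hsumO : (∑ x ∈ orbF π i, π.col x) = 0 := by
      rw [orbF_congr hmi]
      exact (mem_CycT0'.mp hmC).2
    have hiorb : i ∈ orbF π i := mem_orbF.mpr (Equiv.Perm.SameCycle.refl _ _)
    -- the new cycle of j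
    have horbj : orbF π' j = (orbF π i).erase i := by
      ext x
      rw [mem_orbF, hS, Finset.mem_erase, mem_orbF, and_comm]
    have hsumj : (∑ x ∈ orbF π' j, π'.col x) = 0 := by
      rw [horbj]
      have e1 : (∑ x ∈ (orbF π i).erase i, π'.col x)
          = (∑ x ∈ (orbF π i).erase i, π.col x)
            + ∑ x ∈ (orbF π i).erase i, τ.col (σ x) := by
        rw [← Finset.sum_add_distrib]
        exact Finset.sum_congr rfl fun x _ => hcol x
      have e2 : (∑ x ∈ (orbF π i).erase i, π.col x) = - π.col i := by
        have := Finset.sum_erase_add (orbF π i) π.col hiorb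
        rw [hsumO] at this
        linear_combination this
      have e3 : (∑ x ∈ (orbF π i).erase i, τ.col (σ x)) = π.col i := by
        have e4 : (∑ x ∈ (orbF π i).erase i, τ.col (σ x))
            = ∑ y ∈ ((orbF π i).erase i).image σ, τ.col y := by
          rw [Finset.sum_image (fun x _ y _ h => σ.injective h)]
        have e5 : ((orbF π i).erase i).image σ = (orbF π i).erase j := by
          ext y
          simp only [Finset.mem_image, Finset.mem_erase, mem_orbF]
          constructor
          · rintro ⟨x, ⟨hxi, hxorb⟩, rfl⟩
            refine ⟨?_, hxorb.apply_right⟩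
            intro hc
            exact hxi (σ.injective (by rw [hc, hj]))
          · rintro ⟨hyj, hyorb⟩
            refine ⟨σ⁻¹ y, ⟨?_, ?_⟩, by simp⟩
            · intro hc
              apply hyj
              rw [← hj, hσ, ← hc]
              exact (Equiv.apply_symm_apply σ y).symm
            · exact hyorb.symm_apply_right
        rw [e4, e5]
        rw [Finset.sum_eq_single_of_mem i (Finset.mem_erase.mpr ⟨hij, hiorb⟩)
          (fun y hy hyi => h0 y hyi (Finset.mem_erase.mp hy).1)]
        exact hci
      rw [e1, e2, e3]
      simp
    set m' := (orbF π' j).min' (orbF_nonempty π' j) with hm'def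
    have hm'C : m' ∈ CycT (0 : ZMod r) π' := min_mem_CycT0 hsumj
    have hm'orb : π'.perm.SameCycle j m' := mem_orbF.mp ((orbF π' j).min'_mem _)
    have hm'i : m' ≠ i := ((hS m').mp hm'orb).2
    have hm'K : m' ∉ K := fun hc => hc.2 (((hS m').mp hm'orb).1.symm)
    -- counting
    have hins : insert i (insert m' K) ⊆ CycT (0 : ZMod r) π' := by
      intro x hx
      rcases Set.mem_insert_iff.mp hx with rfl | hx
      · exact hiC
      rcases Set.mem_insert_iff.mp hx with rfl | hx
      · exact hm'C
      · exact hKsub hx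
    have h5 : K.ncard + 2 ≤ cyc0 π' := by
      have hcard := Set.ncard_le_ncard hins (Set.toFinite _)
      rw [Set.ncard_insert_of_notMem (by
            intro hc
            rcases Set.mem_insert_iff.mp hc with hc | hc
            · exact hm'i hc.symm
            · exact hiK hc),
        Set.ncard_insert_of_notMem hm'K] at hcard
      exact hcard
    have hcover : CycT (0 : ZMod r) π ⊆ insert m K := by
      intro x hx
      by_cases hxi : σ.SameCycle x i
      · exact Set.mem_insert_iff.mpr (Or.inl
          (cycMin_unique (mem_CycT0'.mp hx).1 (mem_CycT0'.mp hmC).1 (hxi.trans hmi.symm)))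
      · exact Set.mem_insert_iff.mpr (Or.inr ⟨hx, hxi⟩)
    have h6 : cyc0 π ≤ K.ncard + 1 := by
      calc cyc0 π ≤ (insert m K).ncard := Set.ncard_le_ncard hcover (Set.toFinite _)
        _ ≤ K.ncard + 1 := Set.ncard_insert_le _ _
    exact le_trans (by omega) h5
  · -- old cycle of i had nonzero color sum; i is a brand new zero cycle
    push_neg at hex
    have hcover : CycT (0 : ZMod r) π ⊆ K := by
      intro x hx
      exact ⟨hx, fun hc => hex x hx hc⟩
    have hins : insert i K ⊆ CycT (0 : ZMod r) π' := by
      intro x hx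
      rcases Set.mem_insert_iff.mp hx with rfl | hx
      · exact hiC
      · exact hKsub hx
    have h5 : K.ncard + 1 ≤ cyc0 π' := by
      have hcard := Set.ncard_le_ncard hins (Set.toFinite _)
      rwa [Set.ncard_insert_of_notMem hiK] at hcard
    have h6 : cyc0 π ≤ K.ncard := Set.ncard_le_ncard hcover (Set.toFinite _)
    exact le_trans (by omega) h5

lemma CycT0_of_perm_one {ρ : CPerm r n} (h : ρ.perm = 1) :
    CycT (0 : ZMod r) ρ = {a | ρ.col a = 0} := by
  ext a
  have hfix : ∀ x : Fin n, ρ.perm.SameCycle a x ↔ x = a :=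
    fun x => sameCycle_fixed (by rw [h]; rfl) x
  have horb : orbF ρ a = {a} := by
    ext x; rw [mem_orbF, hfix, Finset.mem_singleton]
  rw [Set.mem_setOf_eq, mem_CycT0', horb, Finset.sum_singleton]
  constructor
  · rintro ⟨_, h2⟩; exact h2
  · intro h2
    exact ⟨fun jj hjj => le_of_eq ((hfix jj).mp hjj).symm, h2⟩

/-- For `π ≠ 1` there is a colored transposition increasing `cyc⁰`. -/
lemma exists_step {π : CPerm r n} (hπ : π ≠ 1) :
    ∃ τ : CPerm r n, τ ∈ Tset ∧ τ⁻¹ ∈ Tset ∧ cyc0 π + 1 ≤ cyc0 (τ * π) := by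
  by_cases hperm : π.perm = 1
  · have hcol : ∃ i, π.col i ≠ 0 := by
      by_contra h
      push_neg at h
      exact hπ (CPerm.ext' hperm (funext fun i => h i))
    obtain ⟨i, hi⟩ := hcol
    have hTmem : ct i (-π.col i) i ∈ Tset :=
      ⟨i, i, -π.col i, Or.inr ⟨rfl, neg_ne_zero.mpr hi⟩, rfl⟩
    refine ⟨ct i (-π.col i) i, hTmem, inv_mem_Tset hTmem, ?_⟩
    set π' := ct i (-π.col i) i * π with hπ'd
    have hπ'p : π'.perm = 1 := by
      rw [hπ'd, mul_perm, ct_self_perm, one_mul, hperm]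
    have hcol' : ∀ k, π'.col k = π.col k + (if k = i then -π.col i else 0) := by
      intro k
      rw [hπ'd, mul_col, hperm]
      simp only [Equiv.Perm.one_apply]
      congr 1
      rcases eq_or_ne k i with rfl | hk
      · simp [ct]
      · simp [ct, hk]
    have hset : CycT (0 : ZMod r) π' = insert i (CycT (0 : ZMod r) π) := by
      rw [CycT0_of_perm_one hπ'p, CycT0_of_perm_one hperm]
      ext a
      rcases eq_or_ne a i with rfl | ha
      · simp [hcol' a]
      · simp [hcol' a, ha]
    have hiC : i ∉ CycT (0 : ZMod r) π := by
      rw [CycT0_of_perm_one hperm]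
      exact hi
    unfold cyc0
    rw [hset, Set.ncard_insert_of_notMem hiC]
  · have hex : ∃ i, π.perm i ≠ i := by
      by_contra h
      push_neg at h
      exact hperm (Equiv.ext h)
    obtain ⟨i, hne⟩ := hex
    set j := π.perm i with hjd
    have hij : i ≠ j := fun h => hne h.symm
    rcases lt_or_gt_of_ne hij with hlt | hgt
    · set τ := ct i (-π.col i) j with hτd
      have hTmem : τ ∈ Tset := ⟨i, j, -π.col i, Or.inl hlt, rfl⟩
      refine ⟨τ, hTmem, inv_mem_Tset hTmem, ?_⟩
      refine step_core hij hjd.symm (ct_perm _ _ _) ?_ ?_ ?_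
      · rw [hτd, ct_col_left hij]; simp
      · rw [hτd, ct_col_right]
      · intro k h1 h2; exact ct_col_other h1 h2 _
    · set τ := ct j (π.col i) i with hτd
      have hTmem : τ ∈ Tset := ⟨j, i, π.col i, Or.inl hgt, rfl⟩
      refine ⟨τ, hTmem, inv_mem_Tset hTmem, ?_⟩
      refine step_core hij hjd.symm ?_ ?_ ?_ ?_
      · rw [hτd, ct_perm, Equiv.swap_comm]
      · rw [hτd, ct_col_right]
      · rw [hτd, ct_col_left hij.symm]
      · intro k h1 h2; exact ct_col_other h2 h1 _

lemma cyc0_one : cyc0 (1 : CPerm r n) = n := by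
  unfold cyc0
  rw [CycT0_of_perm_one rfl]
  have : {a : Fin n | (1 : CPerm r n).col a = 0} = Set.univ := by
    ext a; simp
  rw [this, Set.ncard_univ, Nat.card_eq_fintype_card, Fintype.card_fin]

lemma cyc0_le (π : CPerm r n) : cyc0 π ≤ n := by
  have h := Set.ncard_le_ncard (Set.subset_univ (CycT (0 : ZMod r) π)) Set.finite_univ
  rwa [Set.ncard_univ, Nat.card_eq_fintype_card, Fintype.card_fin] at h

lemma length_lb (l : List (CPerm r n)) (h : ∀ g ∈ l, g ∈ Tset) :
    n ≤ cyc0 l.prod + l.length := by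
  induction l with
  | nil => simp [cyc0_one]
  | cons g l ih =>
    have h1 : cyc0 l.prod ≤ cyc0 (g * l.prod) + 1 :=
      cyc0_le_mul_add_one (h g (by simp))
    have h2 := ih (fun x hx => h x (by simp [hx]))
    simp only [List.prod_cons, List.length_cons]
    omega

lemma exists_fact : ∀ (m : ℕ) (π : CPerm r n), n - cyc0 π ≤ m →
    ∃ l : List (CPerm r n), (∀ g ∈ l, g ∈ Tset) ∧ l.prod = π ∧ l.length = n - cyc0 π := by
  intro m
  induction m with
  | zero =>
    intro π hm
    by_cases hπ : π = 1
    · exact ⟨[], by simp, by simp [hπ], by simp [hπ, cyc0_one]⟩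
    · obtain ⟨τ, hτ, hτi, hstep⟩ := exists_step hπ
      have := cyc0_le (τ * π)
      have := cyc0_le π
      omega
  | succ m ih =>
    intro π hm
    by_cases hπ : π = 1
    · exact ⟨[], by simp, by simp [hπ], by simp [hπ, cyc0_one]⟩
    · obtain ⟨τ, hτ, hτi, hstep⟩ := exists_step hπ
      have hle : cyc0 (τ * π) ≤ cyc0 π + 1 := by
        have h1 : cyc0 (τ * π) ≤ cyc0 (τ⁻¹ * (τ * π)) + 1 := cyc0_le_mul_add_one hτi
        rwa [inv_mul_cancel_left] at h1
      have heq : cyc0 (τ * π) = cyc0 π + 1 := le_antisymm hle hstep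
      have hb := cyc0_le (τ * π)
      obtain ⟨l, hl, hprod, hlen⟩ := ih (τ * π) (by omega)
      refine ⟨τ⁻¹ :: l, ?_, ?_, ?_⟩
      · intro g hg
        rcases List.mem_cons.mp hg with rfl | hg
        · exact hτi
        · exact hl g hg
      · rw [List.prod_cons, hprod, inv_mul_cancel_left]
      · simp only [List.length_cons, hlen, heq]
        omega

/-- The reflection length `ℓ'` equals `n - cyc⁰`. -/
theorem lenT_eq_sub (π : CPerm r n) : lenT π = n - cyc0 π := by
  obtain ⟨l, hl, hprod, hlen⟩ := exists_fact (n - cyc0 π) π le_rfl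
  have hmem : (n - cyc0 π) ∈
      {k | ∃ l : List (CPerm r n), l.length = k ∧ (∀ g ∈ l, g ∈ Tset) ∧ l.prod = π} :=
    ⟨l, hlen, hl, hprod⟩
  refine le_antisymm (Nat.sInf_le hmem) ?_
  obtain ⟨l', hlen', hl', hprod'⟩ := Nat.sInf_mem (Set.nonempty_of_mem hmem)
  have hlb := length_lb l' hl'
  rw [hprod'] at hlb
  have hc := cyc0_le π
  unfold lenT lenWrt
  omega

end CPermAux
namespace CPermAux
open CPerm Equiv Finset

variable {r n : ℕ}

/-- Extension of a permutation of `Fin n` to `Fin (n+1)`, fixing the last element. -/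
def extPerm (σ : Equiv.Perm (Fin n)) : Equiv.Perm (Fin (n + 1)) where
  toFun x := if h : x = Fin.last n then Fin.last n else (σ (x.castPred h)).castSucc
  invFun x := if h : x = Fin.last n then Fin.last n else (σ⁻¹ (x.castPred h)).castSucc
  left_inv x := by
    rcases eq_or_ne x (Fin.last n) with rfl | h
    · simp
    · simp only [dif_neg h, dif_neg (Fin.castSucc_lt_last _).ne, Fin.castPred_castSucc]
      simp [Fin.castSucc_castPred]
  right_inv x := by
    rcases eq_or_ne x (Fin.last n) with rfl | h
    · simp
    · simp only [dif_neg h, dif_neg (Fin.castSucc_lt_last _).ne, Fin.castPred_castSucc]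
      simp [Fin.castSucc_castPred]

@[simp] lemma extPerm_last (σ : Equiv.Perm (Fin n)) : extPerm σ (Fin.last n) = Fin.last n := by
  simp [extPerm]

@[simp] lemma extPerm_castSucc (σ : Equiv.Perm (Fin n)) (k : Fin n) :
    extPerm σ k.castSucc = (σ k).castSucc := by
  simp only [extPerm, Equiv.coe_fn_mk, dif_neg (Fin.castSucc_lt_last k).ne,
    Fin.castPred_castSucc]

lemma extPerm_inv (σ : Equiv.Perm (Fin n)) : (extPerm σ)⁻¹ = extPerm σ⁻¹ :=
  Equiv.ext fun _ => rfl

lemma extPerm_pow_castSucc (σ : Equiv.Perm (Fin n)) (k : ℕ) (a : Fin n) :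
    ((extPerm σ) ^ k) a.castSucc = ((σ ^ k) a).castSucc := by
  induction k with
  | zero => simp
  | succ k ih =>
    rw [pow_succ', pow_succ', Equiv.Perm.mul_apply, Equiv.Perm.mul_apply, ih, extPerm_castSucc]

lemma extPerm_zpow_castSucc (σ : Equiv.Perm (Fin n)) (k : ℤ) (a : Fin n) :
    ((extPerm σ) ^ k) a.castSucc = ((σ ^ k) a).castSucc := by
  rcases k with k | k
  · simpa using extPerm_pow_castSucc σ k a
  · rw [zpow_negSucc, zpow_negSucc, ← inv_pow, ← inv_pow, extPerm_inv]
    exact extPerm_pow_castSucc σ⁻¹ (k + 1) a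

lemma extPerm_sameCycle_last (σ : Equiv.Perm (Fin n)) (x : Fin (n + 1)) :
    (extPerm σ).SameCycle (Fin.last n) x ↔ x = Fin.last n :=
  sameCycle_fixed (extPerm_last σ) x

lemma extPerm_sameCycle_castSucc (σ : Equiv.Perm (Fin n)) (a : Fin n) (x : Fin (n + 1)) :
    (extPerm σ).SameCycle a.castSucc x ↔ ∃ b, σ.SameCycle a b ∧ x = b.castSucc := by
  constructor
  · rintro ⟨k, hk⟩
    exact ⟨(σ ^ k) a, ⟨k, rfl⟩, by rw [← hk, extPerm_zpow_castSucc]⟩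
  · rintro ⟨b, ⟨k, hk⟩, rfl⟩
    exact ⟨k, by rw [extPerm_zpow_castSucc, hk]⟩

/-- Extension of a colored permutation by a fixed last letter of color `0`. -/
def iota (ρ : CPerm r n) : CPerm r (n + 1) :=
  ⟨extPerm ρ.perm, fun x => if h : x = Fin.last n then 0 else ρ.col (x.castPred h)⟩

@[simp] lemma iota_perm (ρ : CPerm r n) : (iota ρ).perm = extPerm ρ.perm := rfl

@[simp] lemma iota_col_last (ρ : CPerm r n) : (iota ρ).col (Fin.last n) = 0 := by
  simp [iota]

@[simp] lemma iota_col_castSucc (ρ : CPerm r n) (k : Fin n) :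
    (iota ρ).col k.castSucc = ρ.col k := by
  simp only [iota, dif_neg (Fin.castSucc_lt_last k).ne, Fin.castPred_castSucc]

lemma last_mem_CycT0_iota (ρ : CPerm r n) : Fin.last n ∈ CycT (0 : ZMod r) (iota ρ) := by
  rw [mem_CycT0']
  constructor
  · intro jj hjj
    rw [(extPerm_sameCycle_last _ jj).mp hjj]
  · have horb : orbF (iota ρ) (Fin.last n) = {Fin.last n} := by
      ext x
      rw [mem_orbF, Finset.mem_singleton]
      exact extPerm_sameCycle_last _ x
    rw [horb, Finset.sum_singleton, iota_col_last]

lemma castSucc_mem_CycT0_iota (ρ : CPerm r n) (a : Fin n) :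
    a.castSucc ∈ CycT (0 : ZMod r) (iota ρ) ↔ a ∈ CycT (0 : ZMod r) ρ := by
  have horbeq : orbF (iota ρ) a.castSucc = (orbF ρ a).image Fin.castSucc := by
    ext y
    rw [mem_orbF, Finset.mem_image]
    simp only [iota_perm]
    rw [extPerm_sameCycle_castSucc]
    constructor
    · rintro ⟨b, hb, rfl⟩; exact ⟨b, mem_orbF.mpr hb, rfl⟩
    · rintro ⟨b, hb, rfl⟩; exact ⟨b, mem_orbF.mp hb, rfl⟩
  rw [mem_CycT0', mem_CycT0', horbeq,
    Finset.sum_image (fun x _ y _ h => Fin.castSucc_injective n h)]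
  have hsum : (∑ x ∈ orbF ρ a, (iota ρ).col x.castSucc) = ∑ x ∈ orbF ρ a, ρ.col x :=
    Finset.sum_congr rfl fun x _ => iota_col_castSucc ρ x
  rw [hsum]
  constructor
  · rintro ⟨h1, h2⟩
    refine ⟨fun b hb => ?_, h2⟩
    have := h1 b.castSucc ((extPerm_sameCycle_castSucc _ _ _).mpr ⟨b, hb, rfl⟩)
    exact Fin.castSucc_le_castSucc_iff.mp this
  · rintro ⟨h1, h2⟩
    refine ⟨fun y hy => ?_, h2⟩
    obtain ⟨b, hb, rfl⟩ := (extPerm_sameCycle_castSucc _ _ _).mp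
      (by simpa only [iota_perm] using hy)
    exact Fin.castSucc_le_castSucc_iff.mpr (h1 b hb)

lemma CycT0_iota (ρ : CPerm r n) :
    CycT (0 : ZMod r) (iota ρ) = Fin.castSucc '' (CycT (0 : ZMod r) ρ) ∪ {Fin.last n} := by
  ext x
  rcases eq_or_ne x (Fin.last n) with rfl | hx
  · simp only [Set.mem_union, Set.mem_singleton_iff, or_true, iff_true]
    exact last_mem_CycT0_iota ρ
  · obtain ⟨a, rfl⟩ : ∃ a : Fin n, x = a.castSucc :=
      ⟨x.castPred hx, (Fin.castSucc_castPred x hx).symm⟩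
    simp only [Set.mem_union, Set.mem_singleton_iff, (Fin.castSucc_lt_last a).ne, or_false]
    rw [castSucc_mem_CycT0_iota, Set.mem_image]
    constructor
    · intro h; exact ⟨a, h, rfl⟩
    · rintro ⟨b, hb, hba⟩
      rwa [← Fin.castSucc_injective n hba]

lemma cyc0_iota (ρ : CPerm r n) : cyc0 (iota ρ) = cyc0 ρ + 1 := by
  unfold cyc0
  rw [CycT0_iota, Set.union_singleton, Set.ncard_insert_of_notMem (by
      rintro ⟨a, _, ha⟩
      exact (Fin.castSucc_lt_last a).ne ha),
    Set.ncard_image_of_injective _ (Fin.castSucc_injective n)]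

lemma ct_zero_self (i : Fin n) : ct i (0 : ZMod r) i = 1 := by
  refine CPerm.ext' (ct_self_perm i 0) ?_
  funext k
  rcases eq_or_ne k i with rfl | hk
  · simp [ct]
  · simp [ct, hk]

/-- The controlled merge: attaching the last letter into the cycle of `v`. -/
lemma CycT0_mul_iota {ρ : CPerm r n} {v : Fin (n + 1)} {c : ZMod r} (hv : v ≠ Fin.last n) :
    CycT (0 : ZMod r) (ct v c (Fin.last n) * iota ρ)
      = CycT (0 : ZMod r) (iota ρ) \ {Fin.last n} := by
  set σ := (iota ρ).perm with hσd
  set π := ct v c (Fin.last n) * iota ρ with hπd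
  have hπp : π.perm = Equiv.swap v (Fin.last n) * σ := by rw [hπd, mul_perm, ct_perm]
  have hLfix : σ (Fin.last n) = Fin.last n := extPerm_last _
  have hSCL : ∀ x, σ.SameCycle (Fin.last n) x ↔ x = Fin.last n :=
    fun x => sameCycle_fixed hLfix x
  have hnvL : ¬ σ.SameCycle v (Fin.last n) := fun hc => hv ((hSCL v).mp hc.symm)
  have hM : ∀ x, π.perm.SameCycle v x ↔ (σ.SameCycle v x ∨ x = Fin.last n) := by
    intro x
    rw [hπp, swap_mul_sameCycle hv hnvL x]
    constructor
    · rintro (h | h)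
      · exact Or.inl h
      · exact Or.inr ((hSCL x).mp h)
    · rintro (h | rfl)
      · exact Or.inl h
      · exact Or.inr (Equiv.Perm.SameCycle.refl _ _)
  have hcol : ∀ x, π.col x = (iota ρ).col x + (ct v c (Fin.last n)).col (σ x) := fun x => by
    rw [hπd, mul_col]
  ext x
  rcases eq_or_ne x (Fin.last n) with rfl | hx
  · simp only [Set.mem_diff, Set.mem_singleton_iff, not_true, and_false, iff_false]
    intro hL
    have hminL := (mem_CycT0'.mp hL).1
    have hscv : π.perm.SameCycle (Fin.last n) v := ((hM (Fin.last n)).mpr (Or.inr rfl)).symm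
    have hle := hminL v hscv
    have hvlt : v < Fin.last n := Fin.lt_last_iff_ne_last.mpr hv
    exact absurd hle (not_le.mpr hvlt)
  · simp only [Set.mem_diff, Set.mem_singleton_iff, hx, not_false_iff, and_true]
    by_cases hsc : σ.SameCycle x v
    · -- x lies in the cycle of v : the cycle gains the letter `last`
      have hπvx : π.perm.SameCycle v x := (hM x).mpr (Or.inl hsc.symm)
      have horbx : ∀ y, π.perm.SameCycle x y ↔ (σ.SameCycle x y ∨ y = Fin.last n) := by
        intro y
        constructor
        · intro h
          rcases (hM y).mp (hπvx.trans h) with h2 | h2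
          · exact Or.inl (hsc.trans h2)
          · exact Or.inr h2
        · rintro (h | rfl)
          · exact hπvx.symm.trans ((hM y).mpr (Or.inl (hsc.symm.trans h)))
          · exact hπvx.symm.trans ((hM _).mpr (Or.inr rfl))
      have hLnotin : Fin.last n ∉ orbF (iota ρ) x := by
        rw [mem_orbF]
        intro h2
        exact hx ((hSCL x).mp h2.symm)
      have horbF : orbF π x = insert (Fin.last n) (orbF (iota ρ) x) := by
        ext y
        rw [mem_orbF, horbx, Finset.mem_insert, mem_orbF, or_comm]
      have hvmem : v ∈ orbF (iota ρ) x := mem_orbF.mpr hsc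
      have hsum : (∑ y ∈ orbF π x, π.col y) = ∑ y ∈ orbF (iota ρ) x, (iota ρ).col y := by
        rw [horbF, Finset.sum_insert hLnotin]
        have e1 : π.col (Fin.last n) = c := by
          rw [hcol, hLfix, iota_col_last, ct_col_right, zero_add]
        have e2 : (∑ y ∈ orbF (iota ρ) x, π.col y)
            = (∑ y ∈ orbF (iota ρ) x, (iota ρ).col y)
              + ∑ y ∈ orbF (iota ρ) x, (ct v c (Fin.last n)).col (σ y) := by
          rw [← Finset.sum_add_distrib]
          exact Finset.sum_congr rfl fun y _ => hcol y
        have e3 : (∑ y ∈ orbF (iota ρ) x, (ct v c (Fin.last n)).col (σ y)) = -c := by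
          have e4 : (∑ y ∈ orbF (iota ρ) x, (ct v c (Fin.last n)).col (σ y))
              = ∑ y ∈ (orbF (iota ρ) x).image σ, (ct v c (Fin.last n)).col y := by
            rw [Finset.sum_image (fun a _ b _ h => σ.injective h)]
          have e5 : (orbF (iota ρ) x).image σ = orbF (iota ρ) x := image_perm_orbF _ _
          rw [e4, e5, Finset.sum_eq_single_of_mem v hvmem (fun y hy hyv => by
            refine ct_col_other hyv ?_ c
            rintro rfl
            exact hx ((hSCL x).mp (mem_orbF.mp hy).symm) )]
          exact ct_col_left hv c
        rw [e1, e2, e3]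
        ring
      have hmin : (∀ jj, π.perm.SameCycle x jj → x ≤ jj)
          ↔ (∀ jj, σ.SameCycle x jj → x ≤ jj) := by
        constructor
        · intro h jj hjj
          exact h jj ((horbx jj).mpr (Or.inl hjj))
        · intro h jj hjj
          rcases (horbx jj).mp hjj with h2 | rfl
          · exact h jj h2
          · exact Fin.le_last x
      rw [mem_CycT0', mem_CycT0', hsum, hmin]
    · have hxL : ¬ σ.SameCycle x (Fin.last n) := fun h2 => hx ((hSCL x).mp h2.symm)
      exact mem_CycT0_mul (ct_perm v c (Fin.last n))
        (fun k h1 h2 => ct_col_other h1 h2 c) hsc hxL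

/-- The recoloring of the last letter. -/
lemma CycT0_recolor {ρ : CPerm r n} {c : ZMod r} (hc : c ≠ 0) :
    CycT (0 : ZMod r) (ct (Fin.last n) c (Fin.last n) * iota ρ)
      = CycT (0 : ZMod r) (iota ρ) \ {Fin.last n} := by
  set σ := (iota ρ).perm with hσd
  set π := ct (Fin.last n) c (Fin.last n) * iota ρ with hπd
  have hπp : π.perm = σ := by rw [hπd, mul_perm, ct_self_perm, one_mul]
  have hLfix : σ (Fin.last n) = Fin.last n := extPerm_last _
  have hSCL : ∀ x, σ.SameCycle (Fin.last n) x ↔ x = Fin.last n :=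
    fun x => sameCycle_fixed hLfix x
  have hctcol : ∀ y, (ct (Fin.last n) c (Fin.last n)).col y
      = if y = Fin.last n then c else 0 := by
    intro y
    rcases eq_or_ne y (Fin.last n) with rfl | hy
    · simp [ct]
    · simp [ct, hy]
  have hcol : ∀ x, π.col x = (iota ρ).col x
      + (if σ x = Fin.last n then c else 0) := fun x => by
    rw [hπd, mul_col, ← hctcol]
  ext x
  rcases eq_or_ne x (Fin.last n) with rfl | hx
  · simp only [Set.mem_diff, Set.mem_singleton_iff, not_true, and_false, iff_false]
    intro hL
    have horb : orbF π (Fin.last n) = {Fin.last n} := by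
      ext y
      rw [mem_orbF, Finset.mem_singleton, hπp]
      exact hSCL y
    have := (mem_CycT0'.mp hL).2
    rw [horb, Finset.sum_singleton, hcol, hLfix, if_pos rfl, iota_col_last, zero_add] at this
    exact hc this
  · simp only [Set.mem_diff, Set.mem_singleton_iff, hx, not_false_iff, and_true]
    refine mem_CycT0_congr (fun y => by rw [hπp]) ?_
    intro y hy
    have hyL : y ≠ Fin.last n := by
      rintro rfl
      exact hx ((hSCL x).mp hy.symm)
    have hσyL : σ y ≠ Fin.last n := by
      intro h2
      exact hyL (σ.injective (by rw [h2, hLfix]))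
    rw [hcol, if_neg hσyL, add_zero]

/-- `cyc⁰` after inserting the final letter. -/
lemma cyc0_insert (ρ : CPerm r n) (v : Fin (n + 1)) (c : ZMod r) :
    cyc0 (ct v c (Fin.last n) * iota ρ)
      = cyc0 ρ + (if v = Fin.last n ∧ c = 0 then 1 else 0) := by
  have hLmem := last_mem_CycT0_iota (r := r) ρ
  have hdiff : (CycT (0 : ZMod r) (iota ρ) \ {Fin.last n}).ncard = cyc0 ρ := by
    have h1 := Set.ncard_diff_singleton_add_one hLmem (Set.toFinite _)
    have h2 := cyc0_iota ρ
    unfold cyc0 at h2 ⊢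
    omega
  rcases eq_or_ne v (Fin.last n) with rfl | hv
  · rcases eq_or_ne c 0 with rfl | hc
    · rw [ct_zero_self, one_mul, if_pos ⟨rfl, rfl⟩]
      exact cyc0_iota ρ
    · rw [if_neg (fun h => hc h.2)]
      unfold cyc0
      rw [CycT0_recolor hc]
      exact hdiff
  · rw [if_neg (fun h => hv h.1)]
    unfold cyc0
    rw [CycT0_mul_iota hv]
    exact hdiff

end CPermAux
namespace CPermAux
open CPerm Equiv Finset

variable {r n : ℕ}

/-- The insertion map `CPerm r n × (Fin (n+1) × ZMod r) → CPerm r (n+1)`. -/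
def eFun (x : CPerm r n × Fin (n + 1) × ZMod r) : CPerm r (n + 1) :=
  ct x.2.1 x.2.2 (Fin.last n) * iota x.1

lemma eFun_perm_last (x : CPerm r n × Fin (n + 1) × ZMod r) :
    (eFun x).perm (Fin.last n) = x.2.1 := by
  rw [eFun, mul_perm, ct_perm, Equiv.Perm.mul_apply, iota_perm, extPerm_last,
    Equiv.swap_apply_right]

lemma eFun_col_last (x : CPerm r n × Fin (n + 1) × ZMod r) :
    (eFun x).col (Fin.last n) = x.2.2 := by
  rw [eFun, mul_col, iota_col_last, iota_perm, extPerm_last, ct_col_right, zero_add]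

lemma iota_injective : Function.Injective (iota : CPerm r n → CPerm r (n + 1)) := by
  intro ρ ρ' h
  refine CPerm.ext' ?_ ?_
  · apply Equiv.ext
    intro k
    have h1 : (iota ρ).perm k.castSucc = (iota ρ').perm k.castSucc := by rw [h]
    rw [iota_perm, iota_perm, extPerm_castSucc, extPerm_castSucc] at h1
    exact Fin.castSucc_injective n h1
  · funext k
    have h1 : (iota ρ).col k.castSucc = (iota ρ').col k.castSucc := by rw [h]
    rwa [iota_col_castSucc, iota_col_castSucc] at h1

lemma eFun_injective : Function.Injective (eFun (r := r) (n := n)) := by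
  rintro ⟨ρ, v, c⟩ ⟨ρ', v', c'⟩ h
  have hv : v = v' := by
    have h1 : (eFun (ρ, v, c)).perm (Fin.last n) = v := eFun_perm_last _
    have h2 : (eFun (ρ', v', c')).perm (Fin.last n) = v' := eFun_perm_last _
    rw [← h1, ← h2, h]
  have hc : c = c' := by
    have h1 : (eFun (ρ, v, c)).col (Fin.last n) = c := eFun_col_last _
    have h2 : (eFun (ρ', v', c')).col (Fin.last n) = c' := eFun_col_last _
    rw [← h1, ← h2, h]
  subst hv; subst hc
  have h2 : iota ρ = iota ρ' := mul_left_cancel (h : eFun (ρ, v, c) = eFun (ρ', v, c))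
  rw [iota_injective h2]

lemma card_cperm (r m : ℕ) [NeZero r] :
    Fintype.card (CPerm r m) = Nat.factorial m * r ^ m := by
  have e : CPerm r m ≃ (Equiv.Perm (Fin m) × (Fin m → ZMod r)) :=
    ⟨fun g => (g.perm, g.col), fun p => ⟨p.1, p.2⟩, fun _ => rfl, fun _ => rfl⟩
  rw [Fintype.card_congr e, Fintype.card_prod, Fintype.card_perm, Fintype.card_fin,
    Fintype.card_fun, ZMod.card, Fintype.card_fin]

lemma eFun_bijective [NeZero r] : Function.Bijective (eFun (r := r) (n := n)) := by
  rw [Fintype.bijective_iff_injective_and_card]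
  refine ⟨eFun_injective, ?_⟩
  rw [Fintype.card_prod, Fintype.card_prod, card_cperm, card_cperm, Fintype.card_fin,
    ZMod.card, Nat.factorial_succ]
  ring

lemma r_mul_pos [NeZero r] (m : ℕ) : 1 ≤ r * (m + 1) :=
  Nat.one_le_iff_ne_zero.mpr (Nat.mul_ne_zero (NeZero.ne r) (Nat.succ_ne_zero m))

lemma sum_aux1 [NeZero r] {R : Type*} [CommRing R] (t : R) (m : ℕ) :
    (∑ p : Fin (m + 1) × ZMod r, t ^ (if p.1 = Fin.last m ∧ p.2 = 0 then 1 else 0))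
      = t + ((r * (m + 1) - 1 : ℕ) : R) := by
  have h1 : ∀ p : Fin (m + 1) × ZMod r,
      t ^ (if p.1 = Fin.last m ∧ p.2 = 0 then 1 else 0)
        = 1 + (if p = (Fin.last m, 0) then t - 1 else 0) := by
    rintro ⟨a, b⟩
    by_cases h : a = Fin.last m ∧ b = 0
    · rw [if_pos h, if_pos (by rw [h.1, h.2]), pow_one]; ring
    · rw [if_neg h, if_neg (by rintro hq; exact h (by rw [Prod.ext_iff] at hq; exact hq)),
        pow_zero]; ring
  rw [Finset.sum_congr rfl (fun p _ => h1 p), Finset.sum_add_distrib, Finset.sum_const,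
    Finset.sum_ite_eq' Finset.univ (Fin.last m, (0 : ZMod r)) (fun _ => t - 1),
    if_pos (Finset.mem_univ _)]
  rw [Finset.card_univ, Fintype.card_prod, Fintype.card_fin, ZMod.card, nsmul_eq_mul]
  rw [Nat.cast_sub (r_mul_pos m)]
  push_cast
  ring

lemma sum_aux2 [NeZero r] {R : Type*} [CommRing R] (t : R) (m : ℕ) :
    (∑ p : Fin (m + 1) × ZMod r, t ^ (if p.1 = Fin.last m ∧ p.2 = 0 then 0 else 1))
      = 1 + ((r * (m + 1) - 1 : ℕ) : R) * t := by
  have h1 : ∀ p : Fin (m + 1) × ZMod r,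
      t ^ (if p.1 = Fin.last m ∧ p.2 = 0 then 0 else 1)
        = t + (if p = (Fin.last m, 0) then 1 - t else 0) := by
    rintro ⟨a, b⟩
    by_cases h : a = Fin.last m ∧ b = 0
    · rw [if_pos h, if_pos (by rw [h.1, h.2]), pow_zero]; ring
    · rw [if_neg h, if_neg (by rintro hq; exact h (by rw [Prod.ext_iff] at hq; exact hq)),
        pow_one]; ring
  rw [Finset.sum_congr rfl (fun p _ => h1 p), Finset.sum_add_distrib, Finset.sum_const,
    Finset.sum_ite_eq' Finset.univ (Fin.last m, (0 : ZMod r)) (fun _ => 1 - t),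
    if_pos (Finset.mem_univ _)]
  rw [Finset.card_univ, Fintype.card_prod, Fintype.card_fin, ZMod.card, nsmul_eq_mul]
  rw [Nat.cast_sub (r_mul_pos m)]
  push_cast
  ring

lemma cyc0_zero_of (π : CPerm r 0) : cyc0 π = 0 := by
  unfold cyc0
  rw [Set.eq_empty_of_isEmpty (CycT (0 : ZMod r) π), Set.ncard_empty]

lemma sum_pow_cyc0 [NeZero r] {R : Type*} [CommRing R] (t : R) :
    ∀ m : ℕ, (∑ π : CPerm r m, t ^ cyc0 π)
      = ∏ i ∈ Finset.range m, (t + ((r * (i + 1) - 1 : ℕ) : R)) := by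
  intro m
  induction m with
  | zero =>
    rw [Finset.range_zero, Finset.prod_empty]
    have h1 : ∀ π : CPerm r 0, t ^ cyc0 π = 1 := fun π => by rw [cyc0_zero_of, pow_zero]
    rw [Finset.sum_congr rfl (fun π _ => h1 π), Finset.sum_const, Finset.card_univ,
      card_cperm]
    simp
  | succ m ih =>
    have hb := Fintype.sum_bijective (eFun (r := r) (n := m)) eFun_bijective
      (fun x => t ^ (cyc0 x.1 + if x.2.1 = Fin.last m ∧ x.2.2 = 0 then 1 else 0))
      (fun π => t ^ cyc0 π)
      (by
        rintro ⟨ρ, v, c⟩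
        show t ^ (cyc0 ρ + if v = Fin.last m ∧ c = 0 then 1 else 0)
          = t ^ cyc0 (ct v c (Fin.last m) * iota ρ)
        rw [cyc0_insert ρ v c])
    rw [← hb, Fintype.sum_prod_type]
    have h2 : ∀ ρ : CPerm r m,
        (∑ p : Fin (m + 1) × ZMod r,
            t ^ (cyc0 ρ + if p.1 = Fin.last m ∧ p.2 = 0 then 1 else 0))
          = t ^ cyc0 ρ * (t + ((r * (m + 1) - 1 : ℕ) : R)) := by
      intro ρ
      rw [← sum_aux1 t m, Finset.mul_sum]
      exact Finset.sum_congr rfl fun p _ => by rw [pow_add]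
    rw [Finset.sum_congr rfl (fun ρ _ => h2 ρ), ← Finset.sum_mul, ih,
      Finset.prod_range_succ]

lemma sum_pow_colen [NeZero r] {R : Type*} [CommRing R] (t : R) :
    ∀ m : ℕ, (∑ π : CPerm r m, t ^ (m - cyc0 π))
      = ∏ i ∈ Finset.range m, (1 + ((r * (i + 1) - 1 : ℕ) : R) * t) := by
  intro m
  induction m with
  | zero =>
    rw [Finset.range_zero, Finset.prod_empty]
    have h1 : ∀ π : CPerm r 0, t ^ (0 - cyc0 π) = 1 := fun π => by
      rw [cyc0_zero_of, pow_zero]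
    rw [Finset.sum_congr rfl (fun π _ => h1 π), Finset.sum_const, Finset.card_univ,
      card_cperm]
    simp
  | succ m ih =>
    have hb := Fintype.sum_bijective (eFun (r := r) (n := m)) eFun_bijective
      (fun x => t ^ ((m - cyc0 x.1)
        + if x.2.1 = Fin.last m ∧ x.2.2 = 0 then 0 else 1))
      (fun π => t ^ (m + 1 - cyc0 π))
      (by
        rintro ⟨ρ, v, c⟩
        have h3 : cyc0 (ct v c (Fin.last m) * iota ρ)
            = cyc0 ρ + (if v = Fin.last m ∧ c = 0 then 1 else 0) := cyc0_insert ρ v c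
        have h4 := cyc0_le ρ
        show t ^ ((m - cyc0 ρ) + if v = Fin.last m ∧ c = 0 then 0 else 1)
          = t ^ (m + 1 - cyc0 (ct v c (Fin.last m) * iota ρ))
        congr 1
        rw [h3]
        by_cases h : v = Fin.last m ∧ c = 0
        · rw [if_pos h, if_pos h]
          omega
        · rw [if_neg h, if_neg h]
          omega)
    rw [← hb, Fintype.sum_prod_type]
    have h2 : ∀ ρ : CPerm r m,
        (∑ p : Fin (m + 1) × ZMod r,
            t ^ ((m - cyc0 ρ) + if p.1 = Fin.last m ∧ p.2 = 0 then 0 else 1))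
          = t ^ (m - cyc0 ρ) * (1 + ((r * (m + 1) - 1 : ℕ) : R) * t) := by
      intro ρ
      rw [← sum_aux2 t m, Finset.mul_sum]
      exact Finset.sum_congr rfl fun p _ => by rw [pow_add]
    rw [Finset.sum_congr rfl (fun ρ _ => h2 ρ), ← Finset.sum_mul, ih,
      Finset.prod_range_succ]

end CPermAux
open CPerm in
/-- `Σ_{π ∈ G_{r,n}} t^{cyc^0(π)} = ∏_{i=1}^n (t + ri - 1)` and consequently
`Σ_{π ∈ G_{r,n}} t^{ℓ'(π)} = ∏_{i=1}^n (1 + (ri - 1)t)`. -/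
theorem cyc0_and_lenT_generating_functions (r n : ℕ) [NeZero r]
    (R : Type*) [CommRing R] (t : R) :
    (∑ π : CPerm r n, t ^ (CycT 0 π).ncard =
      ∏ i ∈ Finset.range n, (t + ((r * (i + 1) - 1 : ℕ) : R))) ∧
    ∑ π : CPerm r n, t ^ lenT π =
      ∏ i ∈ Finset.range n, (1 + ((r * (i + 1) - 1 : ℕ) : R) * t) := by
  constructor
  · exact CPermAux.sum_pow_cyc0 t n
  · calc ∑ π : CPerm r n, t ^ lenT π
        = ∑ π : CPerm r n, t ^ (n - CPermAux.cyc0 π) :=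
          Finset.sum_congr rfl fun π _ => by rw [CPermAux.lenT_eq_sub π]
      _ = _ := CPermAux.sum_pow_colen t n
end
end
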